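/- arXiv:1905.03208 — 5 statements merged into one kernel-verified Lean document; each statement's English description precedes it below -/
import Mathlib

section
/- Let I be a small category and F : I → PoM a functor such that every F(i) satisfies (O1) and (O4) and every F(f) preserves suprema of increasing sequences. Then the limit S of F in PoM — the submonoid of the set-theoretic product of the F(i) consisting of all compatible families (s_i)_{i∈I} (i.e. F(f)(s_i)=s_j for every morphism f : i → j), with componentwise addition and order — satisfies (O1) and (O4), and each projection π_i : S → F(i) preserves suprema of increasing sequences. -/
/-!
STATEMENT 0: Let I be a small category and F : I → PoM a functor such that every
F(i) satisfies (O1) and (O4) and every F(f) preserves suprema of increasing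
sequences.  Then the limit S of F in PoM — the submonoid of the set-theoretic
product of the F(i) consisting of all compatible families (with componentwise
addition and order) — satisfies (O1) and (O4), and each projection π_i : S → F(i)
preserves suprema of increasing sequences.
-/

universe u v w

/-- `x` is *way below* `y` (sequential compact containment `x ≪ y`). -/
def WayBelow {M : Type u} [Preorder M] (x y : M) : Prop :=
  ∀ s : ℕ → M, Monotone s → ∀ a : M, IsLUB (Set.range s) a → y ≤ a → ∃ n, x ≤ s n

theorem WayBelow.le {M : Type u} [Preorder M] {x y : M} (h : WayBelow x y) : x ≤ y := by
  obtain ⟨n, hn⟩ := h (fun _ => y) monotone_const y (by simp [Set.range_const]) le_rfl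
  exact hn

theorem WayBelow.mono {M : Type u} [Preorder M] {x' x y y' : M} (h : WayBelow x y)
    (hx : x' ≤ x) (hy : y ≤ y') : WayBelow x' y' := fun s hs a ha hya => by
  obtain ⟨n, hn⟩ := h s hs a ha (hy.trans hya)
  exact ⟨n, hx.trans hn⟩

theorem WayBelow.trans {M : Type u} [Preorder M] {x y z : M} (h : WayBelow x y)
    (h' : WayBelow y z) : WayBelow x z := h'.mono h.le le_rfl

/-- A map preserves suprema of increasing sequences. -/
def PreservesSeqSup {M : Type u} {N : Type v} [Preorder M] [Preorder N] (f : M → N) : Prop :=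
  ∀ s : ℕ → M, Monotone s → ∀ a : M, IsLUB (Set.range s) a →
    IsLUB (Set.range fun n => f (s n)) (f a)

/-- Axiom (O1): every increasing sequence has a supremum. -/
def SeqSupExists (M : Type u) [Preorder M] : Prop :=
  ∀ s : ℕ → M, Monotone s → ∃ a : M, IsLUB (Set.range s) a

/-- Axiom (O4): suprema of increasing sequences are additive. -/
def SeqSupAdditive (M : Type u) [AddCommMonoid M] [Preorder M] : Prop :=
  ∀ s t : ℕ → M, Monotone s → Monotone t → ∀ a b : M,
    IsLUB (Set.range s) a → IsLUB (Set.range t) b →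
    IsLUB (Set.range fun n => s n + t n) (a + b)

/-- The axioms of a positively ordered monoid: the partial order is translation
invariant and `0` is the least element. -/
structure PoMAxioms (M : Type u) [AddCommMonoid M] [PartialOrder M] : Prop where
  add_le_add_left : ∀ a b : M, a ≤ b → ∀ c : M, c + a ≤ c + b
  zero_le : ∀ a : M, 0 ≤ a

/-- A `PoM`-morphism: preserves addition, order and `0`. -/
structure IsPoMHom {M : Type u} {N : Type v} [AddCommMonoid M] [PartialOrder M]
    [AddCommMonoid N] [PartialOrder N] (f : M → N) : Prop where
  map_zero : f 0 = 0
  map_add : ∀ x y : M, f (x + y) = f x + f y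
  mono : Monotone f

/-- The axioms of an abstract Cuntz semigroup (`Cu`-semigroup). -/
structure CuAxioms (M : Type u) [AddCommMonoid M] [PartialOrder M] extends PoMAxioms M : Prop where
  O1 : SeqSupExists M
  O2 : ∀ x : M, ∃ s : ℕ → M, (∀ n, WayBelow (s n) (s (n + 1))) ∧ IsLUB (Set.range s) x
  O3 : ∀ x' x y' y : M, WayBelow x' x → WayBelow y' y → WayBelow (x' + y') (x + y)
  O4 : SeqSupAdditive M

/-- A `Cu`-morphism: preserves addition, order, `0`, way-below, and suprema of
increasing sequences. -/
structure IsCuHom {M : Type u} {N : Type v} [AddCommMonoid M] [PartialOrder M]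
    [AddCommMonoid N] [PartialOrder N] (f : M → N) extends IsPoMHom f : Prop where
  map_wayBelow : ∀ x y : M, WayBelow x y → WayBelow (f x) (f y)
  map_seqSup : PreservesSeqSup f

/-- An ideal of a `Cu`-semigroup: a downward hereditary submonoid that is closed
under suprema of increasing sequences. -/
structure IsCuIdeal {M : Type u} [AddCommMonoid M] [PartialOrder M] (I : Set M) : Prop where
  zero_mem : (0 : M) ∈ I
  add_mem : ∀ x y : M, x ∈ I → y ∈ I → x + y ∈ I
  lower : ∀ x y : M, x ≤ y → y ∈ I → x ∈ I
  seqSup_mem : ∀ s : ℕ → M, Monotone s → (∀ n, s n ∈ I) → ∀ a : M, IsLUB (Set.range s) a → a ∈ I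
open CategoryTheory

/-- The category `PoM` of positively ordered monoids and `PoM`-morphisms. -/
structure PoMCat : Type (u + 1) where
  carrier : Type u
  [addCommMonoid : AddCommMonoid carrier]
  [partialOrder : PartialOrder carrier]
  pom : PoMAxioms carrier

attribute [instance] PoMCat.addCommMonoid PoMCat.partialOrder

instance : CategoryTheory.Category PoMCat.{u} where
  Hom S T := { f : S.carrier → T.carrier // IsPoMHom f }
  id S := ⟨id, rfl, fun _ _ => rfl, fun _ _ h => h⟩
  comp f g := ⟨g.1 ∘ f.1,
    ⟨by simp [Function.comp, f.2.map_zero, g.2.map_zero],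
     fun x y => by simp [Function.comp, f.2.map_add, g.2.map_add],
     g.2.mono.comp f.2.mono⟩⟩

/-- The limit of a functor `F : I ⥤ PoM` in `PoM`: the additive submonoid of the
set-theoretic product consisting of the compatible families. -/
def compatSubmonoid {I : Type u} [SmallCategory I] (F : I ⥤ PoMCat.{u}) :
    AddSubmonoid (∀ i, (F.obj i).carrier) where
  carrier := {s | ∀ (i j : I) (f : i ⟶ j), (F.map f).1 (s i) = s j}
  zero_mem' := fun i j f => by simpa using (F.map f).2.map_zero
  add_mem' := fun {a b} ha hb i j f => by
    show (F.map f).1 (a i + b i) = a j + b j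
    rw [(F.map f).2.map_add, ha i j f, hb i j f]

/-- **(O1) and (O4) pass to limits in PoM.** -/
theorem pomLimit_O1_O4 {I : Type u} [SmallCategory I] (F : I ⥤ PoMCat.{u})
    (hO1 : ∀ i, SeqSupExists (F.obj i).carrier)
    (hO4 : ∀ i, SeqSupAdditive (F.obj i).carrier)
    (hmap : ∀ (i j : I) (f : i ⟶ j), PreservesSeqSup (F.map f).1) :
    SeqSupExists ↥(compatSubmonoid F) ∧ SeqSupAdditive ↥(compatSubmonoid F) ∧
    ∀ i : I, PreservesSeqSup (fun s : ↥(compatSubmonoid F) => s.1 i) := by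
  have key : ∀ (u : ℕ → ↥(compatSubmonoid F)), Monotone u →
      ∀ (c : ∀ i, (F.obj i).carrier),
      (∀ i, IsLUB (Set.range fun n => (u n).1 i) (c i)) →
      ∃ hc : c ∈ compatSubmonoid F,
        IsLUB (Set.range u) (⟨c, hc⟩ : ↥(compatSubmonoid F)) := by
    intro u hu c hcomp
    have hc : c ∈ compatSubmonoid F := by
      intro i j f
      have h1 := hmap i j f (fun n => (u n).1 i) (fun m n h => hu h i) (c i) (hcomp i)
      have h2 : (fun n => (F.map f).1 ((u n).1 i)) = fun n => (u n).1 j :=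
        funext fun n => (u n).2 i j f
      rw [h2] at h1
      exact h1.unique (hcomp j)
    refine ⟨hc, ?_, ?_⟩
    · rintro x ⟨n, rfl⟩ i
      exact (hcomp i).1 ⟨n, rfl⟩
    · intro b hb i
      refine (hcomp i).2 ?_
      rintro x ⟨n, rfl⟩
      exact hb ⟨n, rfl⟩ i
  have proj : ∀ i : I, PreservesSeqSup (fun s : ↥(compatSubmonoid F) => s.1 i) := by
    intro i s hs a ha
    choose c hc using fun j => hO1 j (fun n => (s n).1 j) (fun m n h => hs h j)
    obtain ⟨hcm, hlub⟩ := key s hs c hc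
    have : a = ⟨c, hcm⟩ := ha.unique hlub
    rw [this]
    exact hc i
  refine ⟨?_, ?_, proj⟩
  · intro s hs
    choose c hc using fun j => hO1 j (fun n => (s n).1 j) (fun m n h => hs h j)
    obtain ⟨hcm, hlub⟩ := key s hs c hc
    exact ⟨⟨c, hcm⟩, hlub⟩
  · intro s t hs ht a b ha hb
    have hcomp : ∀ i, IsLUB (Set.range fun n => ((s n + t n : ↥(compatSubmonoid F))).1 i)
        (a.1 i + b.1 i) := fun i =>
      hO4 i (fun n => (s n).1 i) (fun n => (t n).1 i) (fun m n h => hs h i)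
        (fun m n h => ht h i) (a.1 i) (b.1 i) (proj i s hs a ha) (proj i t ht b hb)
    have hmono : Monotone (fun n => s n + t n : ℕ → ↥(compatSubmonoid F)) := by
      intro m n h i
      have h1 := hs h i
      have h2 := ht h i
      calc (s m).1 i + (t m).1 i ≤ (s m).1 i + (t n).1 i :=
            (F.obj i).pom.add_le_add_left _ _ h2 _
        _ ≤ (s n).1 i + (t n).1 i := by
            rw [add_comm ((s m).1 i), add_comm ((s n).1 i)]
            exact (F.obj i).pom.add_le_add_left _ _ h1 _
    obtain ⟨hcm, hlub⟩ := key (fun n => s n + t n) hmono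
      (fun i => a.1 i + b.1 i) hcomp
    have : (⟨fun i => a.1 i + b.1 i, hcm⟩ : ↥(compatSubmonoid F)) = a + b := rfl
    rwa [this] at hlub
end

section
/- The category Q of Q-semigroups is complete. More precisely: given a small category I and a functor F : I → Q, let S be the PoM-limit of F, i.e. the submonoid of compatible families (s_i)_{i∈I} in the set-theoretic product of the F(i) with componentwise addition and order, and let ≺_pw be the componentwise auxiliary relation ((s_i)_i ≺_pw (t_i)_i iff s_i ≺ t_i for all i). Then (S, ≺_pw) is a Q-semigroup, each projection π_i : S → F(i) is a Q-morphism, and (S, (π_i)_i) is a limit of F in Q. -/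
/-!
STATEMENT 1: The category Q of Q-semigroups is complete: given a small category I
and a functor F : I → Q, the PoM-limit S of F (the submonoid of compatible families
in the set-theoretic product, with componentwise addition and order) together with
the componentwise auxiliary relation ≺_pw is a Q-semigroup, each projection
π_i : S → F(i) is a Q-morphism, and (S, (π_i)) is a limit of F in Q.
-/

universe u v w

open CategoryTheory

/-- The axioms of a `Q`-semigroup: a positively ordered monoid satisfying (O1) and
(O4), together with an additive auxiliary relation. -/
structure QAxioms (M : Type u) [AddCommMonoid M] [PartialOrder M] (r : M → M → Prop)
    extends PoMAxioms M : Prop where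
  O1 : SeqSupExists M
  O4 : SeqSupAdditive M
  rel_le : ∀ {x y : M}, r x y → x ≤ y
  le_rel_le : ∀ {w x y z : M}, w ≤ x → r x y → y ≤ z → r w z
  rel_add : ∀ {x x' y y' : M}, r x y → r x' y' → r (x + x') (y + y')
  rel_zero : ∀ x : M, r 0 x

/-- A `Q`-morphism: a PoM-morphism preserving the auxiliary relation and suprema of
increasing sequences. -/
structure IsQHom {M : Type u} {N : Type v} [AddCommMonoid M] [PartialOrder M]
    [AddCommMonoid N] [PartialOrder N] (rM : M → M → Prop) (rN : N → N → Prop)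
    (f : M → N) extends IsPoMHom f : Prop where
  map_rel : ∀ {x y : M}, rM x y → rN (f x) (f y)
  map_seqSup : PreservesSeqSup f

/-- The category `Q` of `Q`-semigroups and `Q`-morphisms. -/
structure QCat : Type (u + 1) where
  carrier : Type u
  [addCommMonoid : AddCommMonoid carrier]
  [partialOrder : PartialOrder carrier]
  rel : carrier → carrier → Prop
  ax : QAxioms carrier rel

attribute [instance] QCat.addCommMonoid QCat.partialOrder

instance : CategoryTheory.Category QCat.{u} where
  Hom S T := { f : S.carrier → T.carrier // IsQHom S.rel T.rel f }
  id S := ⟨id, ⟨rfl, fun _ _ => rfl, fun _ _ h => h⟩, fun h => h, fun _ _ _ ha => ha⟩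
  comp f g := ⟨g.1 ∘ f.1,
    ⟨by simp [Function.comp, f.2.map_zero, g.2.map_zero],
     fun x y => by simp [Function.comp, f.2.map_add, g.2.map_add],
     g.2.mono.comp f.2.mono⟩,
    fun h => g.2.map_rel (f.2.map_rel h),
    fun s hs a ha => g.2.map_seqSup _ (f.2.mono.comp hs) _ (f.2.map_seqSup s hs a ha)⟩

/-- The limit of a functor `F : I ⥤ Q` in `PoM`: the additive submonoid of the
set-theoretic product consisting of the compatible families. -/
def compatSubmonoidQ {I : Type u} [SmallCategory I] (F : I ⥤ QCat.{u}) :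
    AddSubmonoid (∀ i, (F.obj i).carrier) where
  carrier := {s | ∀ (i j : I) (f : i ⟶ j), (F.map f).1 (s i) = s j}
  zero_mem' := fun i j f => by simpa using (F.map f).2.map_zero
  add_mem' := fun {a b} ha hb i j f => by
    show (F.map f).1 (a i + b i) = a j + b j
    rw [(F.map f).2.map_add, ha i j f, hb i j f]

/-- The componentwise auxiliary relation `≺_pw` on the PoM-limit. -/
def qRelPW {I : Type u} [SmallCategory I] (F : I ⥤ QCat.{u})
    (x y : ↥(compatSubmonoidQ F)) : Prop :=
  ∀ i : I, (F.obj i).rel (x.1 i) (y.1 i)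

section QCompleteAux

variable {I : Type u} [SmallCategory I] (F : I ⥤ QCat.{u})

theorem qs_le_iff (x y : ↥(compatSubmonoidQ F)) : x ≤ y ↔ ∀ i, x.1 i ≤ y.1 i := by
  rw [← Subtype.coe_le_coe]; exact Pi.le_def

theorem isLUB_of_pointwise {s : ℕ → ↥(compatSubmonoidQ F)} {a : ↥(compatSubmonoidQ F)}
    (h : ∀ i, IsLUB (Set.range fun n => (s n).1 i) (a.1 i)) :
    IsLUB (Set.range s) a := by
  constructor
  · rintro _ ⟨n, rfl⟩
    exact (qs_le_iff F _ _).2 fun i => (h i).1 ⟨n, rfl⟩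
  · intro c hc
    exact (qs_le_iff F _ _).2 fun i =>
      (h i).2 (by rintro _ ⟨n, rfl⟩; exact (qs_le_iff F _ _).1 (hc ⟨n, rfl⟩) i)

theorem qs_seqSup_exists (s : ℕ → ↥(compatSubmonoidQ F)) (hs : Monotone s) :
    ∃ a : ↥(compatSubmonoidQ F),
      (∀ i, IsLUB (Set.range fun n => (s n).1 i) (a.1 i)) ∧ IsLUB (Set.range s) a := by
  have hmono : ∀ i, Monotone fun n => (s n).1 i := fun i n m hnm =>
    (qs_le_iff F _ _).1 (hs hnm) i
  choose a ha using fun i => (F.obj i).ax.O1 _ (hmono i)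
  have hcompat : (fun i => a i) ∈ compatSubmonoidQ F := by
    intro i j f
    have h1 := (F.map f).2.map_seqSup _ (hmono i) _ (ha i)
    have hr : (Set.range fun n => (F.map f).1 ((s n).1 i)) =
        Set.range fun n => (s n).1 j := by
      apply congrArg Set.range
      funext n
      exact (s n).2 i j f
    rw [hr] at h1
    exact h1.unique (ha j)
  exact ⟨⟨fun i => a i, hcompat⟩, ha, isLUB_of_pointwise F ha⟩

theorem qs_isLUB_pointwise {s : ℕ → ↥(compatSubmonoidQ F)} (hs : Monotone s)
    {a : ↥(compatSubmonoidQ F)} (h : IsLUB (Set.range s) a) :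
    ∀ i, IsLUB (Set.range fun n => (s n).1 i) (a.1 i) := by
  obtain ⟨a', ha', hlub⟩ := qs_seqSup_exists F s hs
  have : a = a' := h.unique hlub
  rw [this]; exact ha'

end QCompleteAux

/-- **The category Q is complete**: the PoM-limit of `F : I ⥤ Q`, equipped with the
componentwise auxiliary relation, is a Q-semigroup, the projections are
Q-morphisms, and the resulting cone is a limit of `F` in `Q`. -/
theorem q_complete {I : Type u} [SmallCategory I] (F : I ⥤ QCat.{u}) :
    QAxioms ↥(compatSubmonoidQ F) (qRelPW F) ∧
    (∀ i : I, IsQHom (qRelPW F) (F.obj i).rel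
      (fun s : ↥(compatSubmonoidQ F) => s.1 i)) ∧
    ∀ (T : QCat.{u}) (σ : ∀ i : I, T.carrier → (F.obj i).carrier),
      (∀ i, IsQHom T.rel (F.obj i).rel (σ i)) →
      (∀ (i j : I) (f : i ⟶ j) (x : T.carrier), (F.map f).1 (σ i x) = σ j x) →
      ∃! α : T.carrier → ↥(compatSubmonoidQ F),
        IsQHom T.rel (qRelPW F) α ∧ ∀ (i : I) (x : T.carrier), (α x).1 i = σ i x := by
  refine ⟨?_, ?_, ?_⟩
  · -- QAxioms
    refine ⟨⟨?_, ?_⟩, ?_, ?_, ?_, ?_, ?_, ?_⟩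
    · intro a b hab c
      refine (qs_le_iff F _ _).2 fun i => ?_
      exact (F.obj i).ax.add_le_add_left _ _ ((qs_le_iff F _ _).1 hab i) _
    · intro a
      exact (qs_le_iff F _ _).2 fun i => (F.obj i).ax.zero_le _
    · intro s hs
      obtain ⟨a, _, ha⟩ := qs_seqSup_exists F s hs
      exact ⟨a, ha⟩
    · intro s t hs ht a b ha hb
      have has := qs_isLUB_pointwise F hs ha
      have hbs := qs_isLUB_pointwise F ht hb
      refine isLUB_of_pointwise F fun i => ?_
      exact (F.obj i).ax.O4 _ _ (fun n m h => (qs_le_iff F _ _).1 (hs h) i)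
        (fun n m h => (qs_le_iff F _ _).1 (ht h) i) _ _ (has i) (hbs i)
    · intro x y h
      exact (qs_le_iff F _ _).2 fun i => (F.obj i).ax.rel_le (h i)
    · intro w x y z hwx hxy hyz i
      exact (F.obj i).ax.le_rel_le ((qs_le_iff F _ _).1 hwx i) (hxy i)
        ((qs_le_iff F _ _).1 hyz i)
    · intro x x' y y' h h' i
      exact (F.obj i).ax.rel_add (h i) (h' i)
    · intro x i
      exact (F.obj i).ax.rel_zero _
  · -- projections are Q-morphisms
    intro i
    refine ⟨⟨rfl, fun x y => rfl, fun x y h => (qs_le_iff F _ _).1 h i⟩,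
      fun h => h i, ?_⟩
    intro s hs a ha
    exact qs_isLUB_pointwise F hs ha i
  · -- universal property
    intro T σ hσ hcomp
    have hmem : ∀ x : T.carrier, (fun i => σ i x) ∈ compatSubmonoidQ F :=
      fun x i j f => hcomp i j f x
    refine ⟨fun x => ⟨fun i => σ i x, hmem x⟩, ⟨⟨⟨?_, ?_, ?_⟩, ?_, ?_⟩, fun i x => rfl⟩, ?_⟩
    · exact Subtype.ext (funext fun i => (hσ i).map_zero)
    · intro x y
      exact Subtype.ext (funext fun i => (hσ i).map_add x y)
    · intro x y h
      exact (qs_le_iff F _ _).2 fun i => (hσ i).mono h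
    · intro x y h i
      exact (hσ i).map_rel h
    · intro s hs a ha
      exact isLUB_of_pointwise F fun i => (hσ i).map_seqSup s hs a ha
    · rintro β ⟨_, hβ⟩
      funext x
      exact Subtype.ext (funext fun i => hβ i x)
end

section
/- The category Cu of Cu-semigroups is complete. More precisely: given a small category I and a functor F : I → Cu, regard each F(i) as a Q-semigroup via its way-below relation ≪, let (S, (π_i)_i) be the limit of F in Q (the PoM of compatible families with the componentwise way-below relation ≪_pw), and let τ(S) be the τ-completion of S. Then τ(S), together with the Cu-morphisms ψ_i := τ(π_i) : τ(S) → τ(F(i)) ≅ F(i), is a limit of F in Cu. -/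
/-!
STATEMENT 2: The category Cu is complete.  More precisely: given a small category I
and a functor F : I → Cu, regard each F(i) as a Q-semigroup via its way-below
relation ≪, let (S, (π_i)) be the limit of F in Q (the PoM of compatible families
with the componentwise way-below relation ≪_pw), and let τ(S) be the τ-completion of
S.  Then τ(S), together with the Cu-morphisms ψ_i := τ(π_i) : τ(S) → τ(F(i)) ≅ F(i)
(given on classes of paths by [f] ↦ (f 0)_i), is a limit of F in Cu.
-/

universe u v w

theorem isCuHom_id {M : Type u} [AddCommMonoid M] [PartialOrder M] : IsCuHom (id : M → M) :=
  ⟨⟨rfl, fun _ _ => rfl, fun _ _ h => h⟩, fun _ _ h => h, fun _ _ _ ha => ha⟩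

theorem IsCuHom.comp {M : Type u} {N : Type v} {P : Type w} [AddCommMonoid M] [PartialOrder M]
    [AddCommMonoid N] [PartialOrder N] [AddCommMonoid P] [PartialOrder P]
    {g : N → P} {f : M → N} (hg : IsCuHom g) (hf : IsCuHom f) : IsCuHom (g ∘ f) := by
  refine ⟨⟨?_, ?_, hg.mono.comp hf.mono⟩, ?_, ?_⟩
  · simp [Function.comp, hf.map_zero, hg.map_zero]
  · intro x y; simp [Function.comp, hf.map_add, hg.map_add]
  · exact fun x y h => hg.map_wayBelow _ _ (hf.map_wayBelow _ _ h)
  · exact fun s hs a ha => hg.map_seqSup _ (hf.mono.comp hs) _ (hf.map_seqSup s hs a ha)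

/-- The category `Cu` of abstract Cuntz semigroups and Cu-morphisms. -/
structure CuCat : Type (u + 1) where
  carrier : Type u
  [addCommMonoid : AddCommMonoid carrier]
  [partialOrder : PartialOrder carrier]
  cu : CuAxioms carrier

attribute [instance] CuCat.addCommMonoid CuCat.partialOrder

instance : CategoryTheory.Category CuCat.{u} where
  Hom S T := { f : S.carrier → T.carrier // IsCuHom f }
  id S := ⟨id, isCuHom_id⟩
  comp f g := ⟨g.1 ∘ f.1, g.2.comp f.2⟩
/-- The (nonpositive) half-line `(-∞, 0]`, the domain of paths. -/
abbrev PathDom : Type := {t : ℝ // t ≤ 0}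

/-- A path in a semigroup equipped with an auxiliary relation `r`: an order
preserving, sup-continuous, `r`-increasing map `(-∞,0] → M`. -/
structure QPath (M : Type u) [Preorder M] (r : M → M → Prop) : Type u where
  toFun : PathDom → M
  mono : Monotone toFun
  lub : ∀ t : PathDom, IsLUB (toFun '' {s | s < t}) (toFun t)
  rel : ∀ ⦃s t : PathDom⦄, s < t → r (toFun s) (toFun t)

namespace QPath

variable {M : Type u} [Preorder M] {r : M → M → Prop}

theorem ext' {f g : QPath M r} (h : ∀ t, f.toFun t = g.toFun t) : f = g := by
  cases f; cases g; simp only [mk.injEq]; exact funext h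

/-- The relation `f ≾ g` on paths: for every `t < 0` there is `t' < 0` with
`r (f t) (g t')`. -/
def LE (f g : QPath M r) : Prop :=
  ∀ t : PathDom, t.1 < 0 → ∃ t' : PathDom, t'.1 < 0 ∧ r (f.toFun t) (g.toFun t')

/-- Equivalence of paths: mutual domination. -/
def Equiv (f g : QPath M r) : Prop := LE f g ∧ LE g f

theorem LE.refl (f : QPath M r) : LE f f := by
  intro t ht
  refine ⟨⟨t.1 / 2, by linarith⟩, by linarith, f.rel ?_⟩
  exact Subtype.mk_lt_mk.mpr (by linarith)

theorem LE.trans' (hr : Transitive r) {f g h : QPath M r} (h₁ : LE f g) (h₂ : LE g h) :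
    LE f h := by
  intro t ht
  obtain ⟨t', ht', h1⟩ := h₁ t ht
  obtain ⟨t'', ht'', h2⟩ := h₂ t' ht'
  exact ⟨t'', ht'', hr h1 h2⟩

theorem equiv_equivalence (hr : Transitive r) : Equivalence (Equiv (M := M) (r := r)) :=
  ⟨fun f => ⟨LE.refl f, LE.refl f⟩, fun h => ⟨h.2, h.1⟩,
   fun h h' => ⟨LE.trans' hr h.1 h'.1, LE.trans' hr h'.2 h.2⟩⟩

end QPath

/-- The `τ`-construction: equivalence classes of paths. -/
def Tau (M : Type u) [Preorder M] (r : M → M → Prop) : Type u :=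
  Quot (QPath.Equiv (M := M) (r := r))

/-- The class of a path in the `τ`-construction. -/
def Tau.mk {M : Type u} [Preorder M] {r : M → M → Prop} (f : QPath M r) : Tau M r :=
  Quot.mk _ f

theorem Tau.exact {M : Type u} [Preorder M] {r : M → M → Prop} (hr : Transitive r)
    {f g : QPath M r} (h : Tau.mk f = Tau.mk g) : QPath.Equiv f g :=
  ((QPath.equiv_equivalence hr).eqvGen_iff).mp (Quot.eq.mp h)

/-- The order on `τ(M)` induced by the relation `≾` on paths. -/
def Tau.LE {M : Type u} [Preorder M] {r : M → M → Prop} (x y : Tau M r) : Prop :=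
  ∀ f g : QPath M r, x = Tau.mk f → y = Tau.mk g → QPath.LE f g

open CategoryTheory

/-- The limit of a functor `F : I ⥤ Cu` in `PoM`: the additive submonoid of the
set-theoretic product consisting of the compatible families, with componentwise
addition and order. -/
def compatSubmonoidCu {I : Type u} [SmallCategory I] (F : I ⥤ CuCat.{u}) :
    AddSubmonoid (∀ i, (F.obj i).carrier) where
  carrier := {s | ∀ (i j : I) (f : i ⟶ j), (F.map f).1 (s i) = s j}
  zero_mem' := fun i j f => by simpa using (F.map f).2.map_zero
  add_mem' := fun {a b} ha hb i j f => by
    show (F.map f).1 (a i + b i) = a j + b j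
    rw [(F.map f).2.map_add, ha i j f, hb i j f]

/-- The componentwise way-below relation `≪_pw` on the limit in `Q`. -/
def cuRelPW {I : Type u} [SmallCategory I] (F : I ⥤ CuCat.{u})
    (x y : ↥(compatSubmonoidCu F)) : Prop :=
  ∀ i : I, WayBelow (x.1 i) (y.1 i)

/-- The `τ`-completion of the limit of `F` in `Q`. -/
abbrev TauLim {I : Type u} [SmallCategory I] (F : I ⥤ CuCat.{u}) : Type u :=
  Tau ↥(compatSubmonoidCu F) (cuRelPW F)


/-!
An increasing sequence of paths `f₀ ≾ f₁ ≾ ⋯` in a Q-semigroup `(M, ≺)` has a supremum path: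
run rescaled copies of the `fₖ` one after another on the segments `[-1/(k+1), -1/(k+2))`,
choosing the scales so that consecutive pieces are linked by `≺` and every `fₙ` is dominated at
some junction, then regularise along the dyadic times. With this, `τ(M)` is a Cu-semigroup in
which `[f] ≪ [g]` means `f 0 ≤ g t` for some `t < 0`. In a Cu-semigroup `T`, interpolating a
`≪`-increasing sequence along the dyadics gives every `x` a path ending at `x`; pushing these
paths forward along a Q-morphism `φ : T → M` is the unique Cu-morphism `T → τ(M)` lying over `φ`
via the endpoint map. A cone over `F` in Cu is exactly a Q-morphism into the limit `S` of `F` in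
Q, so `τ(S)` is the limit of `F` in Cu.
-/

open Set

class IsAuxiliaryRel {M : Type*} [Preorder M] (r : M → M → Prop) : Prop where
  le_of_rel : ∀ {x y : M}, r x y → x ≤ y
  rel_of_le_of_rel_of_le : ∀ {x' x y y' : M}, x' ≤ x → r x y → y ≤ y' → r x' y'

namespace IsAuxiliaryRel

variable {M : Type*} [Preorder M] {r : M → M → Prop} [IsAuxiliaryRel r] {x y z : M}

theorem rel_of_le_of_rel (hxy : x ≤ y) (hyz : r y z) : r x z :=
  rel_of_le_of_rel_of_le hxy hyz le_rfl

theorem rel_of_rel_of_le (hxy : r x y) (hyz : y ≤ z) : r x z :=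
  rel_of_le_of_rel_of_le le_rfl hxy hyz

theorem rel_trans (hxy : r x y) (hyz : r y z) : r x z :=
  rel_of_rel_of_le hxy (le_of_rel hyz)

instance : IsTrans M r := ⟨fun _ _ _ => rel_trans⟩

end IsAuxiliaryRel

instance {M : Type*} [Preorder M] : IsAuxiliaryRel (WayBelow : M → M → Prop) :=
  ⟨WayBelow.le, fun hx h hy => h.mono hx hy⟩

class IsQSemigroup (M : Type*) [AddCommMonoid M] [PartialOrder M] (r : M → M → Prop) : Prop
    extends PoMAxioms M, IsAuxiliaryRel r where
  seqSupExists : SeqSupExists M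
  seqSupAdditive : SeqSupAdditive M
  zero_rel : ∀ x : M, r 0 x
  add_rel : ∀ {x' x y' y : M}, r x' x → r y' y → r (x' + y') (x + y)

structure IsQHom_s2 {M : Type*} {N : Type*} [AddCommMonoid M] [PartialOrder M]
    [AddCommMonoid N] [PartialOrder N] (r : M → M → Prop) (r' : N → N → Prop)
    (f : M → N) : Prop extends IsPoMHom f where
  map_rel : ∀ {x y : M}, r x y → r' (f x) (f y)
  map_seqSup : PreservesSeqSup f

open IsAuxiliaryRel

section Basics

variable {M N P : Type*} [AddCommMonoid M] [PartialOrder M] [AddCommMonoid N] [PartialOrder N]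
  [AddCommMonoid P] [PartialOrder P]

theorem PoMAxioms.add_le_add (hM : PoMAxioms M) {a b c d : M} (hab : a ≤ b) (hcd : c ≤ d) :
    a + c ≤ b + d :=
  calc a + c ≤ a + d := hM.add_le_add_left c d hcd a
    _ = d + a := add_comm _ _
    _ ≤ d + b := hM.add_le_add_left a b hab d
    _ = b + d := add_comm _ _

theorem PoMAxioms.wayBelow_zero (hM : PoMAxioms M) (y : M) : WayBelow 0 y :=
  fun _ _ _ _ _ => ⟨0, hM.zero_le _⟩

theorem CuAxioms.isQSemigroup (hM : CuAxioms M) : IsQSemigroup M WayBelow where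
  toPoMAxioms := hM.toPoMAxioms
  seqSupExists := hM.O1
  seqSupAdditive := hM.O4
  zero_rel := hM.wayBelow_zero
  add_rel := hM.O3 _ _ _ _

theorem WayBelow.exists_between (hM : CuAxioms M) {x y : M} (h : WayBelow x y) :
    ∃ z, WayBelow x z ∧ WayBelow z y := by
  obtain ⟨s, hs, hlub⟩ := hM.O2 y
  obtain ⟨n, hn⟩ := h s (monotone_nat_of_le_succ fun n => (hs n).le) y hlub le_rfl
  exact ⟨s (n + 1), (hs n).mono hn le_rfl, (hs (n + 1)).mono le_rfl (hlub.1 ⟨n + 2, rfl⟩)⟩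

theorem IsQHom_s2.comp {r : M → M → Prop} {r' : N → N → Prop} {r'' : P → P → Prop}
    {g : N → P} {f : M → N} (hg : IsQHom_s2 r' r'' g) (hf : IsQHom_s2 r r' f) :
    IsQHom_s2 r r'' (g ∘ f) where
  map_zero := by simp [hf.map_zero, hg.map_zero]
  map_add x y := by simp [hf.map_add, hg.map_add]
  mono := hg.mono.comp hf.mono
  map_rel h := hg.map_rel (hf.map_rel h)
  map_seqSup s hs a ha := hg.map_seqSup _ (hf.mono.comp hs) _ (hf.map_seqSup s hs a ha)

theorem IsQHom_s2.isCuHom {f : M → N} (hf : IsQHom_s2 WayBelow WayBelow f) : IsCuHom f :=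
  ⟨hf.toIsPoMHom, fun _ _ => hf.map_rel, hf.map_seqSup⟩

end Basics

namespace PathDom

def zero : PathDom := ⟨0, le_refl 0⟩

theorem le_zero (t : PathDom) : t ≤ zero := t.2

noncomputable def approx (t : PathDom) (n : ℕ) : PathDom :=
  ⟨t.1 - 1 / (n + 1), by linarith [t.2, Nat.one_div_pos_of_nat (α := ℝ) (n := n)]⟩

theorem approx_lt (t : PathDom) (n : ℕ) : approx t n < t :=
  Subtype.mk_lt_mk.2 (by linarith [Nat.one_div_pos_of_nat (α := ℝ) (n := n)])

theorem approx_strictMono (t : PathDom) : StrictMono (approx t) := fun _ _ hmn =>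
  Subtype.mk_lt_mk.2 (sub_lt_sub_left (Nat.one_div_lt_one_div hmn) _)

theorem approx_mono (t : PathDom) : Monotone (approx t) := (approx_strictMono t).monotone

theorem approx_strictMono_left (n : ℕ) : StrictMono fun t => approx t n := fun _ _ h =>
  Subtype.mk_lt_mk.2 (sub_lt_sub_right (Subtype.coe_lt_coe.2 h) _)

theorem approx_comm (t : PathDom) (m n : ℕ) : approx (approx t m) n = approx (approx t n) m :=
  Subtype.ext (by simp only [approx]; ring)

theorem exists_approx_le_approx {m n : ℕ} (hmn : m < n) :
    ∃ t : PathDom, t.1 < 0 ∧ approx zero m ≤ approx t n := by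
  have h := Nat.one_div_lt_one_div (α := ℝ) hmn
  exact ⟨⟨1 / (n + 1) - 1 / (m + 1), by linarith⟩, by simp only; linarith,
    Subtype.mk_le_mk.2 (by simp only [zero]; linarith)⟩

theorem approx_zero_neg (n : ℕ) : (approx zero n).1 < 0 := approx_lt zero n

theorem exists_le_approx (t : PathDom) {s : PathDom} (hs : s < t) : ∃ n, s ≤ approx t n := by
  obtain ⟨n, hn⟩ := exists_nat_one_div_lt (sub_pos.2 (Subtype.coe_lt_coe.2 hs))
  exact ⟨n, Subtype.mk_le_mk.2 (by linarith)⟩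

noncomputable def half (t : PathDom) : PathDom := ⟨t.1 / 2, by linarith [t.2]⟩

theorem half_neg {t : PathDom} (ht : t.1 < 0) : (half t).1 < 0 := by
  change t.1 / 2 < 0; linarith

theorem lt_half {t : PathDom} (ht : t.1 < 0) : t < half t :=
  Subtype.mk_lt_mk.2 (by linarith)

theorem max_neg {s t : PathDom} (hs : s.1 < 0) (ht : t.1 < 0) : (max s t).1 < 0 := by
  rcases max_choice s t with h | h <;> rw [h] <;> assumption

theorem isLUB_image_lt_iff {M : Type*} [Preorder M] {g : PathDom → M} (hg : Monotone g)
    (t : PathDom) {a : M} :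
    IsLUB (g '' {s | s < t}) a ↔ IsLUB (range fun n => g (approx t n)) a := by
  refine isLUB_congr (subset_antisymm
    (upperBounds_mono_of_isCofinalFor (IsCofinalFor.of_subset ?_))
    (upperBounds_mono_of_isCofinalFor ?_))
  · rintro _ ⟨n, rfl⟩
    exact ⟨approx t n, approx_lt t n, rfl⟩
  · rintro _ ⟨s, hs, rfl⟩
    obtain ⟨n, hn⟩ := exists_le_approx t hs
    exact ⟨_, ⟨n, rfl⟩, hg hn⟩

end PathDom

namespace QPath

open PathDom

section Preorder

variable {M : Type*} [Preorder M] {r : M → M → Prop}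

def endpoint (f : QPath M r) : M := f.toFun PathDom.zero

theorem le_endpoint (f : QPath M r) (t : PathDom) : f.toFun t ≤ f.endpoint :=
  f.mono (le_zero t)

theorem isLUB_approx (f : QPath M r) (t : PathDom) :
    IsLUB (range fun n => f.toFun (approx t n)) (f.toFun t) :=
  (isLUB_image_lt_iff f.mono t).1 (f.lub t)

theorem rel_half (f : QPath M r) {t : PathDom} (ht : t.1 < 0) :
    r (f.toFun t) (f.toFun (half t)) :=
  f.rel (lt_half ht)

theorem LE.endpoint_le [IsAuxiliaryRel r] {f g : QPath M r} (h : QPath.LE f g) :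
    f.endpoint ≤ g.endpoint :=
  (f.lub PathDom.zero).2 <| by
    rintro _ ⟨s, hs, rfl⟩
    obtain ⟨t, _, hst⟩ := h s hs
    exact (le_of_rel hst).trans (g.le_endpoint t)

theorem exists_le_of_wayBelow_endpoint (p : QPath M WayBelow) {x : M}
    (h : WayBelow x p.endpoint) : ∃ u : PathDom, u.1 < 0 ∧ x ≤ p.toFun u :=
  let ⟨n, hn⟩ := h _ (p.mono.comp (approx_mono zero)) _ (p.isLUB_approx zero) le_rfl
  ⟨approx zero n, approx_zero_neg n, hn⟩

theorem wayBelow_endpoint (p : QPath M WayBelow) {t : PathDom} (ht : t.1 < 0) :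
    WayBelow (p.toFun t) p.endpoint :=
  (p.rel_half ht).mono le_rfl (p.le_endpoint _)

theorem LE_of_endpoint_le {p q : QPath M WayBelow} (h : p.endpoint ≤ q.endpoint) :
    QPath.LE p q := fun _ ht =>
  let ⟨u, hu, hle⟩ := q.exists_le_of_wayBelow_endpoint ((p.wayBelow_endpoint ht).mono le_rfl h)
  ⟨half u, half_neg hu, (q.rel_half hu).mono hle le_rfl⟩

theorem LE_of_LE_succ [IsTrans M r] {fs : ℕ → QPath M r}
    (hfs : ∀ n, QPath.LE (fs n) (fs (n + 1))) {m n : ℕ} (hmn : m ≤ n) :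
    QPath.LE (fs m) (fs n) := by
  induction n, hmn using Nat.le_induction with
  | base => exact QPath.LE.refl _
  | succ n _ ih => exact ih.trans' (fun _ _ _ => IsTrans.trans _ _ _) (hfs n)

noncomputable def shift (f : QPath M r) (n : ℕ) : QPath M r where
  toFun t := f.toFun (approx t n)
  mono _ _ h := f.mono ((approx_strictMono_left n).monotone h)
  lub t := by
    refine (isLUB_image_lt_iff (f.mono.comp (approx_strictMono_left n).monotone) t).2 ?_
    simpa only [Function.comp_apply, approx_comm] using f.isLUB_approx (approx t n)
  rel _ _ h := f.rel (approx_strictMono_left n h)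

end Preorder

variable {M : Type*} [AddCommMonoid M] [PartialOrder M] {r : M → M → Prop} [IsQSemigroup M r]

protected def zero : QPath M r where
  toFun _ := 0
  mono _ _ _ := le_rfl
  lub t := ⟨by rintro _ ⟨s, _, rfl⟩; exact le_rfl,
    fun _ hb => hb ⟨approx t 0, approx_lt t 0, rfl⟩⟩
  rel _ _ _ := IsQSemigroup.zero_rel _

protected def add (f g : QPath M r) : QPath M r where
  toFun t := f.toFun t + g.toFun t
  mono _ _ h := (IsQSemigroup.toPoMAxioms r).add_le_add (f.mono h) (g.mono h)
  lub t := (isLUB_image_lt_iff (fun _ _ h => (IsQSemigroup.toPoMAxioms r).add_le_add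
    (f.mono h) (g.mono h)) t).2 (IsQSemigroup.seqSupAdditive r _ _ (f.mono.comp (approx_mono t))
      (g.mono.comp (approx_mono t)) _ _ (f.isLUB_approx t) (g.isLUB_approx t))
  rel _ _ h := IsQSemigroup.add_rel (f.rel h) (g.rel h)

theorem LE.add {f f' g g' : QPath M r} (hf : QPath.LE f f') (hg : QPath.LE g g') :
    QPath.LE (f.add g) (f'.add g') := by
  intro t ht
  obtain ⟨t₁, ht₁, h₁⟩ := hf t ht
  obtain ⟨t₂, ht₂, h₂⟩ := hg t ht
  exact ⟨max t₁ t₂, max_neg ht₁ ht₂, IsQSemigroup.add_rel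
    (rel_of_rel_of_le h₁ (f'.mono (le_max_left t₁ t₂)))
    (rel_of_rel_of_le h₂ (g'.mono (le_max_right t₁ t₂)))⟩

end QPath

namespace Tau

section Order

variable {M : Type*} [Preorder M] {r : M → M → Prop}

@[elab_as_elim]
protected theorem ind {p : Tau M r → Prop} (h : ∀ f, p (Tau.mk f)) (x : Tau M r) : p x :=
  Quot.ind h x

variable [IsTrans M r]

theorem LE_mk_iff {f g : QPath M r} : Tau.LE (mk f) (mk g) ↔ QPath.LE f g := by
  have htrans : ∀ ⦃x y z⦄, r x y → r y z → r x z := fun _ _ _ => IsTrans.trans _ _ _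
  refine ⟨fun h => h f g rfl rfl, fun h f' g' hf hg => ?_⟩
  exact (Tau.exact htrans hf).2.trans' htrans (h.trans' htrans (Tau.exact htrans hg).1)

scoped instance instPartialOrder : PartialOrder (Tau M r) where
  le := Tau.LE
  le_refl := Tau.ind fun f => LE_mk_iff.2 (QPath.LE.refl f)
  le_trans := Tau.ind fun f => Tau.ind fun g => Tau.ind fun h hfg hgh =>
    LE_mk_iff.2 ((LE_mk_iff.1 hfg).trans' (fun _ _ _ => IsTrans.trans _ _ _) (LE_mk_iff.1 hgh))
  le_antisymm := Tau.ind fun f => Tau.ind fun g hfg hgf =>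
    Quot.sound ⟨LE_mk_iff.1 hfg, LE_mk_iff.1 hgf⟩

theorem mk_le_mk {f g : QPath M r} : mk f ≤ mk g ↔ QPath.LE f g := LE_mk_iff

end Order

variable {M : Type*} [AddCommMonoid M] [PartialOrder M] {r : M → M → Prop} [IsQSemigroup M r]

scoped instance instAdd : Add (Tau M r) where
  add := Quot.map₂ QPath.add
    (fun f _ _ h => ⟨(QPath.LE.refl f).add h.1, (QPath.LE.refl f).add h.2⟩)
    (fun _ _ g h => ⟨h.1.add (QPath.LE.refl g), h.2.add (QPath.LE.refl g)⟩)

scoped instance instZero : Zero (Tau M r) := ⟨mk QPath.zero⟩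

scoped instance instAddCommMonoid : AddCommMonoid (Tau M r) where
  add_assoc := Tau.ind fun _ => Tau.ind fun _ => Tau.ind fun _ =>
    congrArg mk (QPath.ext' fun _ => add_assoc _ _ _)
  zero_add := Tau.ind fun _ => congrArg mk (QPath.ext' fun _ => zero_add _)
  add_zero := Tau.ind fun _ => congrArg mk (QPath.ext' fun _ => add_zero _)
  add_comm := Tau.ind fun _ => Tau.ind fun _ => congrArg mk (QPath.ext' fun _ => add_comm _ _)
  nsmul := nsmulRec

theorem mk_add_mk (f g : QPath M r) : mk f + mk g = mk (f.add g) := rfl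

theorem zero_eq_mk : (0 : Tau M r) = mk QPath.zero := rfl

theorem pomAxioms : PoMAxioms (Tau M r) where
  add_le_add_left := Tau.ind fun _ => Tau.ind fun _ hfg => Tau.ind fun h =>
    mk_le_mk.2 ((QPath.LE.refl h).add (mk_le_mk.1 hfg))
  zero_le := Tau.ind fun _ => mk_le_mk.2 fun t ht =>
    ⟨t, ht, IsQSemigroup.zero_rel _⟩

end Tau

/-- The least `k ≥ 1` with `-k/2^n < t`. -/
noncomputable def gridIndex (n : ℕ) (t : ℝ) : ℕ := ⌊-t * 2 ^ n⌋₊ + 1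

theorem one_le_gridIndex (n : ℕ) (t : ℝ) : 1 ≤ gridIndex n t := Nat.le_add_left 1 _

theorem gridIndex_zero (n : ℕ) : gridIndex n 0 = 1 := by simp [gridIndex]

theorem gridIndex_cast (n : ℕ) (t : ℝ) : (gridIndex n t : ℝ) = ⌊-t * 2 ^ n⌋₊ + 1 := by
  simp [gridIndex]

theorem neg_gridIndex_div_lt (n : ℕ) (t : ℝ) : -(gridIndex n t : ℝ) / 2 ^ n < t := by
  rw [div_lt_iff₀ (by positivity), gridIndex_cast]
  linarith [Nat.lt_floor_add_one (-t * 2 ^ n)]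

theorem sub_le_neg_gridIndex_div {t : ℝ} (ht : t ≤ 0) (n : ℕ) :
    t - 1 / 2 ^ n ≤ -(gridIndex n t : ℝ) / 2 ^ n := by
  have h2 : (0 : ℝ) < 2 ^ n := by positivity
  have h := Nat.floor_le (by nlinarith : (0 : ℝ) ≤ -t * 2 ^ n)
  rw [le_div_iff₀ h2, gridIndex_cast, sub_mul, one_div_mul_cancel h2.ne']
  linarith

theorem gridIndex_succ_le (n : ℕ) {t : ℝ} (ht : t ≤ 0) :
    gridIndex (n + 1) t ≤ 2 * gridIndex n t := by
  have h2 : (0 : ℝ) < 2 ^ n := by positivity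
  suffices h : ⌊-t * 2 ^ (n + 1)⌋₊ < 2 * ⌊-t * 2 ^ n⌋₊ + 2 by
    rw [gridIndex, gridIndex]; omega
  rw [Nat.floor_lt (by nlinarith [pow_pos two_pos (M₀ := ℝ) (n + 1)])]
  push_cast
  nlinarith [Nat.lt_floor_add_one (-t * 2 ^ n), pow_succ (2 : ℝ) n]

theorem neg_div_two_pow_neg {k : ℕ} (hk : 1 ≤ k) (n : ℕ) : -(k : ℝ) / 2 ^ n < 0 :=
  div_neg_of_neg_of_pos (by simp; omega) (by positivity)

/-- `val n k` is the value at the dyadic time `-k/2^n`. -/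
structure DyadicChain (M : Type*) [Preorder M] (r : M → M → Prop) where
  val : ℕ → ℕ → M
  val_two_mul : ∀ n k, 1 ≤ k → val (n + 1) (2 * k) = val n k
  rel_succ : ∀ n k, 1 ≤ k → r (val n (k + 1)) (val n k)

namespace DyadicChain

variable {M : Type*} [Preorder M] {r : M → M → Prop} (W : DyadicChain M r)

theorem val_mul_two_pow (p n k : ℕ) (hk : 1 ≤ k) : W.val (n + p) (k * 2 ^ p) = W.val n k := by
  induction p with
  | zero => simp
  | succ p ih =>
    rw [← ih, ← add_assoc, pow_succ, ← mul_assoc, mul_comm _ 2,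
      W.val_two_mul _ _ (Nat.one_le_iff_ne_zero.2 (by positivity))]

variable [IsAuxiliaryRel r]

theorem rel_of_lt_index (n : ℕ) {j k : ℕ} (hj : 1 ≤ j) (hjk : j < k) :
    r (W.val n k) (W.val n j) := by
  induction k, hjk using Nat.le_induction with
  | base => exact W.rel_succ n j hj
  | succ k hjk ih => exact rel_trans (W.rel_succ n k (hj.trans (Nat.le_of_succ_le hjk))) ih

theorem rel_of_lt {n m k j : ℕ} (hk : 1 ≤ k) (hj : 1 ≤ j)
    (h : (j : ℝ) / 2 ^ m < (k : ℝ) / 2 ^ n) : r (W.val n k) (W.val m j) := by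
  have hnat : j * 2 ^ n < k * 2 ^ m := by
    rw [div_lt_div_iff₀ (by positivity) (by positivity)] at h
    exact_mod_cast h
  rw [← W.val_mul_two_pow m n k hk, ← W.val_mul_two_pow n m j hj, Nat.add_comm m n]
  exact W.rel_of_lt_index (n + m) (Nat.one_le_iff_ne_zero.2 (by positivity)) hnat

theorem monotone_val_gridIndex (t : PathDom) : Monotone fun n => W.val n (gridIndex n t.1) := by
  refine monotone_nat_of_le_succ fun n => ?_
  rcases (gridIndex_succ_le n t.2).lt_or_eq with h | h
  · refine le_of_rel (W.rel_of_lt (one_le_gridIndex _ _) (one_le_gridIndex _ _) ?_)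
    have h' : (gridIndex (n + 1) t.1 : ℝ) < 2 * gridIndex n t.1 := by exact_mod_cast h
    rw [div_lt_div_iff₀ (by positivity) (by positivity), pow_succ]
    nlinarith [pow_pos two_pos (M₀ := ℝ) n]
  · rw [h, W.val_two_mul _ _ (one_le_gridIndex _ _)]

variable (hM : SeqSupExists M)

noncomputable def pathFun (t : PathDom) : M := (hM _ (W.monotone_val_gridIndex t)).choose

theorem isLUB_pathFun (t : PathDom) :
    IsLUB (range fun n => W.val n (gridIndex n t.1)) (W.pathFun hM t) :=
  (hM _ (W.monotone_val_gridIndex t)).choose_spec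

theorem val_le_pathFun {t : PathDom} {m j : ℕ} (hj : 1 ≤ j) (h : -(j : ℝ) / 2 ^ m < t.1) :
    W.val m j ≤ W.pathFun hM t := by
  rw [neg_div] at h
  obtain ⟨n, hn⟩ := exists_pow_lt_of_lt_one (by linarith : (0 : ℝ) < t.1 + j / 2 ^ m)
    (by norm_num : (1 : ℝ) / 2 < 1)
  rw [div_pow, one_pow] at hn
  have hlt : (gridIndex n t.1 : ℝ) / 2 ^ n < j / 2 ^ m := by
    linarith [sub_le_neg_gridIndex_div t.2 n, neg_div (2 ^ n : ℝ) (gridIndex n t.1)]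
  exact (le_of_rel (W.rel_of_lt hj (one_le_gridIndex _ _) hlt)).trans
    ((W.isLUB_pathFun hM t).1 ⟨n, rfl⟩)

theorem pathFun_le_val {t : PathDom} {m j : ℕ} (hj : 1 ≤ j) (h : t.1 ≤ -(j : ℝ) / 2 ^ m) :
    W.pathFun hM t ≤ W.val m j := by
  refine (W.isLUB_pathFun hM t).2 ?_
  rintro _ ⟨n, rfl⟩
  refine le_of_rel (W.rel_of_lt (one_le_gridIndex _ _) hj ?_)
  linarith [neg_gridIndex_div_lt n t.1, neg_div (2 ^ n : ℝ) (gridIndex n t.1),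
    neg_div (2 ^ m : ℝ) (j : ℝ)]

theorem monotone_pathFun : Monotone (W.pathFun hM) := fun s t hst =>
  (W.isLUB_pathFun hM s).2 <| by
    rintro _ ⟨n, rfl⟩
    exact W.val_le_pathFun hM (one_le_gridIndex _ _)
      ((neg_gridIndex_div_lt n s.1).trans_le hst)

theorem rel_pathFun {s t : PathDom} (hst : s < t) : r (W.pathFun hM s) (W.pathFun hM t) := by
  have hst' : s.1 < t.1 := hst
  obtain ⟨m, hm⟩ := exists_pow_lt_of_lt_one (by linarith : (0 : ℝ) < (t.1 - s.1) / 2)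
    (by norm_num : (1 : ℝ) / 2 < 1)
  rw [div_pow, one_pow] at hm
  set k := gridIndex m t.1
  have hk := sub_le_neg_gridIndex_div t.2 m
  have hlow : W.pathFun hM s ≤ W.val m (k + 1) := by
    refine W.pathFun_le_val hM (by omega) ?_
    have : -((k : ℝ) + 1) / 2 ^ m = -(k : ℝ) / 2 ^ m - 1 / 2 ^ m := by ring
    push_cast
    linarith
  have hmid : r (W.val m (k + 1)) (W.val m k) := W.rel_succ m k (one_le_gridIndex _ _)
  have hhigh : W.val m k ≤ W.pathFun hM t := (W.isLUB_pathFun hM t).1 ⟨m, rfl⟩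
  exact rel_of_le_of_rel_of_le hlow hmid hhigh

theorem isLUB_pathFun_image_lt (t : PathDom) :
    IsLUB (W.pathFun hM '' {s | s < t}) (W.pathFun hM t) := by
  refine (PathDom.isLUB_image_lt_iff (W.monotone_pathFun hM) t).2
    ⟨?_, fun b hb => (W.isLUB_pathFun hM t).2 ?_⟩
  · rintro _ ⟨n, rfl⟩
    exact W.monotone_pathFun hM (PathDom.approx_lt t n).le
  · rintro _ ⟨n, rfl⟩
    have hn := neg_gridIndex_div_lt n t.1
    rw [neg_div] at hn
    obtain ⟨p, hp⟩ := exists_nat_one_div_lt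
      (by linarith : (0 : ℝ) < t.1 + gridIndex n t.1 / 2 ^ n)
    refine (W.val_le_pathFun hM (one_le_gridIndex _ _) ?_).trans (hb ⟨p, rfl⟩)
    change _ < t.1 - 1 / ((p : ℝ) + 1)
    linarith [neg_div (2 ^ n : ℝ) (gridIndex n t.1)]

noncomputable def toPath : QPath M r where
  toFun := W.pathFun hM
  mono := W.monotone_pathFun hM
  lub := W.isLUB_pathFun_image_lt hM
  rel _ _ := W.rel_pathFun hM

theorem isLUB_endpoint_toPath :
    IsLUB (range fun n => W.val n 1) (W.toPath hM).endpoint := by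
  have h := W.isLUB_pathFun hM PathDom.zero
  simp only [PathDom.zero, gridIndex_zero] at h
  exact h

noncomputable def ofFun (V : PathDom → M)
    (hV : ∀ {q v : PathDom}, q < v → v.1 < 0 → r (V q) (V v)) : DyadicChain M r where
  val n k := V ⟨-(k : ℝ) / 2 ^ n, div_nonpos_of_nonpos_of_nonneg (by simp) (by positivity)⟩
  val_two_mul n k _ := congrArg V (Subtype.ext (by push_cast; rw [pow_succ]; field_simp))
  rel_succ n k hk := hV (Subtype.mk_lt_mk.2 (by gcongr; simp))
    (neg_div_two_pow_neg hk n)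

variable {V : PathDom → M} (hV : ∀ {q v : PathDom}, q < v → v.1 < 0 → r (V q) (V v))

theorem le_toPath_ofFun {q t : PathDom} (hqt : q < t) :
    V q ≤ ((ofFun V hV).toPath hM).toFun t := by
  have hqt' : q.1 < t.1 := hqt
  obtain ⟨m, hm⟩ := exists_pow_lt_of_lt_one (by linarith : (0 : ℝ) < t.1 - q.1)
    (by norm_num : (1 : ℝ) / 2 < 1)
  rw [div_pow, one_pow] at hm
  have hj := one_le_gridIndex m t.1
  refine (le_of_rel (hV (Subtype.mk_lt_mk.2 ?_) (neg_div_two_pow_neg hj m))).trans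
    ((ofFun V hV).val_le_pathFun hM hj (neg_gridIndex_div_lt m t.1))
  linarith [sub_le_neg_gridIndex_div t.2 m]

theorem exists_toPath_ofFun_le {t : PathDom} (ht : t.1 < 0) :
    ∃ q : PathDom, q.1 < 0 ∧ ((ofFun V hV).toPath hM).toFun t ≤ V q := by
  obtain ⟨m, hm⟩ := exists_pow_lt_of_lt_one (neg_pos.2 ht) (by norm_num : (1 : ℝ) / 2 < 1)
  rw [div_pow, one_pow] at hm
  refine ⟨_, neg_div_two_pow_neg le_rfl m, (ofFun V hV).pathFun_le_val hM le_rfl ?_⟩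
  push_cast
  linarith [neg_div (2 ^ m : ℝ) 1]

end DyadicChain

namespace PathDom

noncomputable def segTime (k : ℕ) : PathDom := ⟨-1 / (k + 1), by
  rw [neg_div]; exact neg_nonpos.2 Nat.one_div_pos_of_nat.le⟩

theorem segTime_neg (k : ℕ) : (segTime k).1 < 0 := by
  change -1 / ((k : ℝ) + 1) < 0
  rw [neg_div]; exact neg_neg_of_pos Nat.one_div_pos_of_nat

theorem segTime_strictMono : StrictMono segTime := fun j k hjk => by
  change -1 / ((j : ℝ) + 1) < -1 / ((k : ℝ) + 1)
  rw [neg_div, neg_div, neg_lt_neg_iff]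
  exact Nat.one_div_lt_one_div hjk

theorem neg_one_le_segTime (k : ℕ) : -1 ≤ (segTime k).1 := by
  simpa [segTime] using segTime_strictMono.monotone (Nat.zero_le k)

/-- The index of the segment `[segTime k, segTime (k+1))` containing `q`. -/
noncomputable def segIdx (q : PathDom) : ℕ := ⌊-q.1⁻¹⌋₊ - 1

theorem segIdx_segTime (k : ℕ) : segIdx (segTime k) = k := by
  have h : -(segTime k).1⁻¹ = ((k + 1 : ℕ) : ℝ) := by simp [segTime, div_neg]
  rw [segIdx, h, Nat.floor_natCast, Nat.add_sub_cancel]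

theorem segTime_segIdx_le_and_lt {q : PathDom} (hq1 : -1 ≤ q.1) (hq : q.1 < 0) :
    segTime (segIdx q) ≤ q ∧ q < segTime (segIdx q + 1) := by
  set s := -q.1⁻¹ with hs
  have hs1 : 1 ≤ s := by
    rw [hs, ← inv_neg, one_le_inv₀ (neg_pos.2 hq)]; linarith
  have hN : 1 ≤ ⌊s⌋₊ := Nat.le_floor (by exact_mod_cast hs1)
  have hcast : ((segIdx q : ℕ) : ℝ) + 1 = ⌊s⌋₊ := by
    rw [segIdx, ← hs]; push_cast [Nat.cast_sub hN]; ring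
  have hq' : q.1 = -1 / s := by rw [hs]; field_simp
  have hpos : (0 : ℝ) < ⌊s⌋₊ := by exact_mod_cast hN
  refine ⟨Subtype.mk_le_mk.2 ?_, Subtype.mk_lt_mk.2 ?_⟩
  · rw [hcast, hq', neg_div, neg_div, neg_le_neg_iff]
    exact one_div_le_one_div_of_le hpos (Nat.floor_le (by linarith))
  · push_cast
    rw [hcast, hq', neg_div, neg_div, neg_lt_neg_iff]
    exact one_div_lt_one_div_of_lt (by linarith) (Nat.lt_floor_add_one s)

theorem segIdx_mono {q v : PathDom} (hq : q.1 < 0) (hqv : q ≤ v) (hv : v.1 < 0) :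
    segIdx q ≤ segIdx v :=
  Nat.sub_le_sub_right (Nat.floor_le_floor (neg_le_neg ((inv_le_inv_of_neg hv hq).2 hqv))) 1

def scale (c : {c : ℝ // 0 < c}) (q : PathDom) : PathDom :=
  ⟨c.1 * q.1, mul_nonpos_of_nonneg_of_nonpos c.2.le q.2⟩

theorem scale_strictMono (c : {c : ℝ // 0 < c}) : StrictMono (scale c) := fun _ _ h =>
  Subtype.mk_lt_mk.2 (mul_lt_mul_of_pos_left h c.2)

theorem scale_neg (c : {c : ℝ // 0 < c}) {q : PathDom} (hq : q.1 < 0) : (scale c q).1 < 0 :=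
  mul_neg_of_pos_of_neg c.2 hq

theorem exists_le_scale {w q : PathDom} (hw : w.1 < 0) (hq : q.1 < 0) :
    ∃ c : {c : ℝ // 0 < c}, w ≤ scale c q :=
  ⟨⟨w.1 / q.1, div_pos_of_neg_of_neg hw hq⟩,
    Subtype.mk_le_mk.2 (by rw [div_mul_cancel₀ _ hq.ne])⟩

end PathDom

namespace QPath

open PathDom

section SupPath

variable {M : Type*} [AddCommMonoid M] [PartialOrder M] {r : M → M → Prop} [IsQSemigroup M r]
  (fs : ℕ → QPath M r) (hfs : ∀ n, QPath.LE (fs n) (fs (n + 1)))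

include hfs in
theorem exists_next_scale (k : ℕ) (c : {c : ℝ // 0 < c}) : ∃ c' : {c : ℝ // 0 < c},
    r ((fs k).toFun (scale c (segTime (k + 1))))
      ((fs (k + 1)).toFun (scale c' (segTime (k + 1)))) ∧
    r ((fs k.unpair.1).toFun (segTime k.unpair.2))
      ((fs (k + 1)).toFun (scale c' (segTime (k + 1)))) := by
  obtain ⟨w₁, hw₁, h₁⟩ := hfs k _ (scale_neg c (segTime_neg (k + 1)))
  obtain ⟨w₂, hw₂, h₂⟩ := LE_of_LE_succ hfs ((Nat.unpair_left_le k).trans k.le_succ) _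
    (segTime_neg k.unpair.2)
  obtain ⟨c', hc'⟩ := exists_le_scale (max_neg hw₁ hw₂) (segTime_neg (k + 1))
  exact ⟨c', rel_of_rel_of_le h₁ ((fs (k + 1)).mono ((le_max_left _ _).trans hc')),
    rel_of_rel_of_le h₂ ((fs (k + 1)).mono ((le_max_right _ _).trans hc'))⟩

/-- The path `fs k` is run, at speed `pieceScale k`, on the segment `[segTime k, segTime (k+1))`;
the scales are chosen so that consecutive pieces are linked by the relation and so that every
`fs n` at every time `segTime v` is dominated at the junction number `Nat.pair n v + 1`. -/
noncomputable def pieceScale : ℕ → {c : ℝ // 0 < c}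
  | 0 => ⟨1, one_pos⟩
  | k + 1 => (exists_next_scale fs hfs k (pieceScale k)).choose

noncomputable def piece (k : ℕ) (q : PathDom) : M := (fs k).toFun (scale (pieceScale fs hfs k) q)

theorem rel_piece_succ (k : ℕ) :
    r (piece fs hfs k (segTime (k + 1))) (piece fs hfs (k + 1) (segTime (k + 1))) :=
  (exists_next_scale fs hfs k (pieceScale fs hfs k)).choose_spec.1

theorem rel_piece_unpair (k : ℕ) :
    r ((fs k.unpair.1).toFun (segTime k.unpair.2)) (piece fs hfs (k + 1) (segTime (k + 1))) :=
  (exists_next_scale fs hfs k (pieceScale fs hfs k)).choose_spec.2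

theorem piece_mono (k : ℕ) : Monotone (piece fs hfs k) :=
  (fs k).mono.comp (scale_strictMono _).monotone

theorem rel_piece_of_lt {j k : ℕ} (hjk : j < k) {v : PathDom} (hv : segTime k ≤ v) :
    r (piece fs hfs j (segTime (j + 1))) (piece fs hfs k v) := by
  induction k, hjk using Nat.le_induction generalizing v with
  | base => exact rel_of_rel_of_le (rel_piece_succ fs hfs j) (piece_mono fs hfs _ hv)
  | succ k hjk ih =>
    exact rel_trans (ih (segTime_strictMono.monotone k.le_succ))
      (rel_of_rel_of_le (rel_piece_succ fs hfs k) (piece_mono fs hfs _ hv))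

noncomputable def concat (q : PathDom) : M := if -1 ≤ q.1 then piece fs hfs (segIdx q) q else 0

theorem concat_segTime (k : ℕ) : concat fs hfs (segTime k) = piece fs hfs k (segTime k) := by
  rw [concat, if_pos (neg_one_le_segTime k), segIdx_segTime]

theorem rel_concat {q v : PathDom} (hqv : q < v) (hv : v.1 < 0) :
    r (concat fs hfs q) (concat fs hfs v) := by
  have hqv' : q.1 < v.1 := hqv
  unfold concat
  by_cases hq1 : -1 ≤ q.1
  · rw [if_pos hq1, if_pos (by linarith)]
    have hq := (segTime_segIdx_le_and_lt hq1 (hqv'.trans hv)).2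
    have hv' := (segTime_segIdx_le_and_lt (by linarith) hv).1
    rcases (segIdx_mono (hqv'.trans hv) hqv.le hv).lt_or_eq with hlt | heq
    · exact rel_of_le_of_rel (piece_mono fs hfs _ hq.le) (rel_piece_of_lt fs hfs hlt hv')
    · rw [← heq]
      exact (fs _).rel ((scale_strictMono _) hqv)
  · rw [if_neg hq1]
    exact IsQSemigroup.zero_rel _

theorem exists_concat_le {q : PathDom} (hq : q.1 < 0) :
    ∃ (k : ℕ) (u : PathDom), u.1 < 0 ∧ concat fs hfs q ≤ (fs k).toFun u := by
  unfold concat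
  split_ifs
  · exact ⟨_, _, scale_neg _ hq, le_rfl⟩
  · exact ⟨0, q, hq, (IsQSemigroup.toPoMAxioms r).zero_le _⟩

noncomputable def supPath : QPath M r :=
  (DyadicChain.ofFun (concat fs hfs) (rel_concat fs hfs)).toPath (IsQSemigroup.seqSupExists r)

theorem exists_supPath_le {t : PathDom} (ht : t.1 < 0) :
    ∃ (k : ℕ) (u : PathDom), u.1 < 0 ∧ (supPath fs hfs).toFun t ≤ (fs k).toFun u := by
  obtain ⟨q, hq, htq⟩ := DyadicChain.exists_toPath_ofFun_le _ (rel_concat fs hfs) ht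
  obtain ⟨k, u, hu, hqu⟩ := exists_concat_le fs hfs hq
  exact ⟨k, u, hu, htq.trans hqu⟩

theorem LE_supPath (n : ℕ) : QPath.LE (fs n) (supPath fs hfs) := by
  intro t ht
  obtain ⟨v, hv⟩ := exists_nat_one_div_lt (neg_pos.2 ht)
  have htv : t ≤ segTime v := Subtype.mk_le_mk.2 (by rw [neg_div]; linarith)
  set k := Nat.pair n v
  have hjunction := rel_piece_unpair fs hfs k
  rw [Nat.unpair_pair, ← concat_segTime] at hjunction
  exact ⟨segTime (k + 2), segTime_neg _, rel_of_le_of_rel_of_le ((fs n).mono htv) hjunction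
    (DyadicChain.le_toPath_ofFun _ (rel_concat fs hfs) (segTime_strictMono (by omega)))⟩

theorem supPath_LE {h : QPath M r} (hh : ∀ n, QPath.LE (fs n) h) :
    QPath.LE (supPath fs hfs) h := by
  intro t ht
  obtain ⟨k, u, hu, htu⟩ := exists_supPath_le fs hfs ht
  obtain ⟨t', ht', hrel⟩ := hh k u hu
  exact ⟨t', ht', rel_of_le_of_rel htu hrel⟩

end SupPath

end QPath

namespace Tau

open PathDom

section Endpoint

variable {M : Type*} [PartialOrder M] {r : M → M → Prop} [IsAuxiliaryRel r]

noncomputable def endpoint : Tau M r → M :=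
  Quot.lift QPath.endpoint fun _ _ h => le_antisymm h.1.endpoint_le h.2.endpoint_le

theorem endpoint_mono : Monotone (endpoint : Tau M r → M) :=
  Tau.ind fun _ => Tau.ind fun _ h => (mk_le_mk.1 h).endpoint_le

theorem isLUB_mk_shift (f : QPath M r) : IsLUB (range fun n => mk (f.shift n)) (mk f) := by
  refine ⟨?_, Tau.ind fun h hh => mk_le_mk.2 fun t ht => ?_⟩
  · rintro _ ⟨n, rfl⟩
    exact mk_le_mk.2 fun t ht => ⟨t, ht, f.rel (approx_lt t n)⟩
  · obtain ⟨n, hn⟩ := exists_nat_one_div_lt (by linarith : (0 : ℝ) < -t.1 / 2)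
    obtain ⟨t', ht', hrel⟩ := mk_le_mk.1 (hh ⟨n, rfl⟩) (half t) (half_neg ht)
    refine ⟨t', ht', rel_of_le_of_rel (f.mono (Subtype.mk_le_mk.2 ?_)) hrel⟩
    change t.1 ≤ t.1 / 2 - 1 / (n + 1)
    linarith

theorem monotone_mk_shift (f : QPath M r) : Monotone fun n => mk (f.shift n) :=
  monotone_nat_of_le_succ fun n => mk_le_mk.2 fun t ht =>
    ⟨t, ht, f.rel (approx_strictMono t n.lt_succ_self)⟩

end Endpoint

variable {M : Type*} [AddCommMonoid M] [PartialOrder M] {r : M → M → Prop} [IsQSemigroup M r]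

theorem endpoint_add (x y : Tau M r) : (x + y).endpoint = x.endpoint + y.endpoint := by
  induction x using Tau.ind
  induction y using Tau.ind
  rfl

theorem isLUB_mk_supPath (fs : ℕ → QPath M r) (hfs : ∀ n, QPath.LE (fs n) (fs (n + 1))) :
    IsLUB (range fun n => mk (fs n)) (mk (QPath.supPath fs hfs)) := by
  refine ⟨?_, Tau.ind fun h hh => mk_le_mk.2 (QPath.supPath_LE fs hfs fun n => ?_)⟩
  · rintro _ ⟨n, rfl⟩
    exact mk_le_mk.2 (QPath.LE_supPath fs hfs n)
  · exact mk_le_mk.1 (hh ⟨n, rfl⟩)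

theorem exists_path_seq_of_monotone {u : ℕ → Tau M r} (hu : Monotone u) :
    ∃ (fs : ℕ → QPath M r) (_ : ∀ n, QPath.LE (fs n) (fs (n + 1))),
      u = fun n => mk (fs n) := by
  choose fs hfs using fun n => Quot.exists_rep (u n)
  obtain rfl : u = fun n => mk (fs n) := funext fun n => (hfs n).symm
  exact ⟨fs, fun n => mk_le_mk.1 (hu n.le_succ), rfl⟩

theorem exists_supPath_of_isLUB {u : ℕ → Tau M r} (hu : Monotone u) {a : Tau M r}
    (ha : IsLUB (range u) a) :
    ∃ (fs : ℕ → QPath M r) (hfs : ∀ n, QPath.LE (fs n) (fs (n + 1))),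
      u = (fun n => mk (fs n)) ∧ a = mk (QPath.supPath fs hfs) := by
  obtain ⟨fs, hfs, rfl⟩ := exists_path_seq_of_monotone hu
  exact ⟨fs, hfs, rfl, ha.unique (isLUB_mk_supPath fs hfs)⟩

theorem wayBelow_mk_iff {x : Tau M r} {g : QPath M r} :
    WayBelow x (mk g) ↔ ∃ t : PathDom, t.1 < 0 ∧ x.endpoint ≤ g.toFun t := by
  constructor
  · intro h
    obtain ⟨n, hn⟩ := h _ (monotone_mk_shift g) _ (isLUB_mk_shift g) le_rfl
    exact ⟨approx zero n, approx_zero_neg n, endpoint_mono hn⟩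
  · induction x using Tau.ind with | h f => ?_
    rintro ⟨t, ht, hft⟩ u hu a ha hga
    obtain ⟨fs, hfs, rfl, rfl⟩ := exists_supPath_of_isLUB hu ha
    obtain ⟨t', ht', hgt⟩ := mk_le_mk.1 hga t ht
    obtain ⟨k, u, hu, hle⟩ := QPath.exists_supPath_le fs hfs ht'
    exact ⟨k, mk_le_mk.2 fun s _ => ⟨u, hu,
      rel_of_le_of_rel_of_le ((f.le_endpoint s).trans hft) hgt hle⟩⟩

theorem seqSupExists : SeqSupExists (Tau M r) := fun _ hu => by
  obtain ⟨fs, hfs, rfl⟩ := exists_path_seq_of_monotone hu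
  exact ⟨_, isLUB_mk_supPath fs hfs⟩

theorem exists_wayBelow_seq (x : Tau M r) :
    ∃ s : ℕ → Tau M r, (∀ n, WayBelow (s n) (s (n + 1))) ∧ IsLUB (range s) x := by
  induction x using Tau.ind with | h f => ?_
  refine ⟨fun n => mk (f.shift n), fun n => wayBelow_mk_iff.2 ?_, isLUB_mk_shift f⟩
  obtain ⟨t, ht, hle⟩ := exists_approx_le_approx n.lt_succ_self
  exact ⟨t, ht, f.mono hle⟩

theorem add_wayBelow_add {x' x y' y : Tau M r} (hx : WayBelow x' x) (hy : WayBelow y' y) :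
    WayBelow (x' + y') (x + y) := by
  induction x using Tau.ind with | h f => ?_
  induction y using Tau.ind with | h g => ?_
  obtain ⟨t₁, ht₁, h₁⟩ := wayBelow_mk_iff.1 hx
  obtain ⟨t₂, ht₂, h₂⟩ := wayBelow_mk_iff.1 hy
  refine wayBelow_mk_iff.2 ⟨max t₁ t₂, max_neg ht₁ ht₂, ?_⟩
  rw [endpoint_add]
  exact (IsQSemigroup.toPoMAxioms r).add_le_add (h₁.trans (f.mono (le_max_left _ _)))
    (h₂.trans (g.mono (le_max_right _ _)))

theorem seqSupAdditive : SeqSupAdditive (Tau M r) := by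
  intro u v hu hv a b ha hb
  obtain ⟨fs, hfs, rfl, rfl⟩ := exists_supPath_of_isLUB hu ha
  obtain ⟨gs, hgs, rfl, rfl⟩ := exists_supPath_of_isLUB hv hb
  refine ⟨?_, Tau.ind fun h hh => mk_le_mk.2 fun t ht => ?_⟩
  · rintro _ ⟨n, rfl⟩
    exact mk_le_mk.2 ((QPath.LE_supPath fs hfs n).add (QPath.LE_supPath gs hgs n))
  · obtain ⟨k₁, u₁, hu₁, hle₁⟩ := QPath.exists_supPath_le fs hfs ht
    obtain ⟨k₂, u₂, hu₂, hle₂⟩ := QPath.exists_supPath_le gs hgs ht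
    set N := max k₁ k₂
    obtain ⟨w₁, hw₁, hr₁⟩ := QPath.LE_of_LE_succ hfs (le_max_left k₁ k₂) u₁ hu₁
    obtain ⟨w₂, hw₂, hr₂⟩ := QPath.LE_of_LE_succ hgs (le_max_right k₁ k₂) u₂ hu₂
    obtain ⟨t', ht', hrel⟩ := mk_le_mk.1 (hh ⟨N, rfl⟩) (max w₁ w₂) (max_neg hw₁ hw₂)
    refine ⟨t', ht', rel_trans (rel_of_le_of_rel
      ((IsQSemigroup.toPoMAxioms r).add_le_add hle₁ hle₂) ?_) hrel⟩
    exact IsQSemigroup.add_rel (rel_of_rel_of_le hr₁ ((fs N).mono (le_max_left _ _)))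
      (rel_of_rel_of_le hr₂ ((gs N).mono (le_max_right _ _)))

theorem cuAxioms : CuAxioms (Tau M r) where
  toPoMAxioms := pomAxioms
  O1 := seqSupExists
  O2 := exists_wayBelow_seq
  O3 _ _ _ _ := add_wayBelow_add
  O4 := seqSupAdditive

theorem isQHom_endpoint : IsQHom_s2 WayBelow r (endpoint : Tau M r → M) where
  map_zero := rfl
  map_add := endpoint_add
  mono := endpoint_mono
  map_rel {x y} h := by
    induction y using Tau.ind with | h g => ?_
    obtain ⟨t, ht, hle⟩ := wayBelow_mk_iff.1 h
    exact rel_of_le_of_rel_of_le hle (g.rel_half ht) (g.le_endpoint _)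
  map_seqSup u hu a ha := by
    obtain ⟨fs, hfs, rfl, rfl⟩ := exists_supPath_of_isLUB hu ha
    refine ⟨?_, fun b hb => ((QPath.supPath fs hfs).lub zero).2 ?_⟩
    · rintro _ ⟨n, rfl⟩
      exact (QPath.LE_supPath fs hfs n).endpoint_le
    · rintro _ ⟨s, hs, rfl⟩
      obtain ⟨k, u, _, hle⟩ := QPath.exists_supPath_le fs hfs hs
      exact hle.trans (((fs k).le_endpoint u).trans (hb ⟨k, rfl⟩))

end Tau

section CuPath

variable {T : Type*} [AddCommMonoid T] [PartialOrder T] (hT : CuAxioms T)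

open Classical in
noncomputable def interpolant (x y : T) : T :=
  if h : WayBelow x y then (WayBelow.exists_between hT h).choose else y

theorem wayBelow_interpolant {x y : T} (h : WayBelow x y) :
    WayBelow x (interpolant hT x y) ∧ WayBelow (interpolant hT x y) y := by
  rw [interpolant, dif_pos h]
  exact (WayBelow.exists_between hT h).choose_spec

/-- Level `n + 1` keeps level `n` at the even indices and interpolates at the odd ones; the
value at time `-1/2^n` is `z n`. -/
noncomputable def interpGrid (z : ℕ → T) : ℕ → ℕ → T
  | 0, k => if k = 1 then z 0 else 0
  | n + 1, k =>
    if k % 2 = 0 then interpGrid z n (k / 2)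
    else if k = 1 then z (n + 1)
    else interpolant hT (interpGrid z n (k / 2 + 1)) (interpGrid z n (k / 2))

variable (z : ℕ → T)

theorem interpGrid_one (n : ℕ) : interpGrid hT z n 1 = z n := by
  cases n <;> simp [interpGrid]

theorem interpGrid_two_mul (n k : ℕ) : interpGrid hT z (n + 1) (2 * k) = interpGrid hT z n k := by
  simp [interpGrid]

theorem interpGrid_two_mul_add_one (n : ℕ) {m : ℕ} (hm : 1 ≤ m) :
    interpGrid hT z (n + 1) (2 * m + 1) =
      interpolant hT (interpGrid hT z n (m + 1)) (interpGrid hT z n m) := by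
  simp only [interpGrid]
  rw [if_neg (by omega), if_neg (by omega), show (2 * m + 1) / 2 = m by omega]

theorem interpGrid_wayBelow_succ (hz : ∀ n, WayBelow (z n) (z (n + 1))) (n : ℕ) :
    ∀ k, 1 ≤ k → WayBelow (interpGrid hT z n (k + 1)) (interpGrid hT z n k) := by
  induction n with
  | zero =>
    intro k hk
    rw [interpGrid, if_neg (by omega)]
    exact hT.wayBelow_zero _
  | succ n ih =>
    intro k hk
    obtain ⟨m, rfl | rfl⟩ := Nat.even_or_odd' k
    · rw [interpGrid_two_mul_add_one hT z n (by omega), interpGrid_two_mul]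
      exact (wayBelow_interpolant hT (ih m (by omega))).2
    · rw [show 2 * m + 1 + 1 = 2 * (m + 1) by ring, interpGrid_two_mul]
      rcases Nat.eq_zero_or_pos m with rfl | hm
      · rw [interpGrid_one, interpGrid_one]
        exact hz n
      · rw [interpGrid_two_mul_add_one hT z n hm]
        exact (wayBelow_interpolant hT (ih m hm)).1

end CuPath

theorem CuAxioms.exists_path_endpoint_eq {T : Type*} [AddCommMonoid T] [PartialOrder T]
    (hT : CuAxioms T) (x : T) : ∃ p : QPath T WayBelow, p.endpoint = x := by
  obtain ⟨z, hz, hx⟩ := hT.O2 x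
  let W : DyadicChain T WayBelow :=
    ⟨interpGrid hT z, fun n k _ => interpGrid_two_mul hT z n k,
      interpGrid_wayBelow_succ hT z hz⟩
  refine ⟨W.toPath hT.O1, (W.isLUB_endpoint_toPath hT.O1).unique ?_⟩
  simpa only [W, interpGrid_one] using hx

namespace QPath

variable {N M : Type*} [AddCommMonoid N] [PartialOrder N] [AddCommMonoid M] [PartialOrder M]
  {r' : N → N → Prop} {r : M → M → Prop} {φ : N → M}

def map (hφ : IsQHom_s2 r' r φ) (p : QPath N r') : QPath M r where
  toFun t := φ (p.toFun t)
  mono := hφ.mono.comp p.mono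
  lub t := (PathDom.isLUB_image_lt_iff (hφ.mono.comp p.mono) t).2
    (hφ.map_seqSup _ (p.mono.comp (PathDom.approx_mono t)) _ (p.isLUB_approx t))
  rel _ _ h := hφ.map_rel (p.rel h)

theorem LE.map (hφ : IsQHom_s2 r' r φ) {p q : QPath N r'} (h : QPath.LE p q) :
    QPath.LE (p.map hφ) (q.map hφ) := fun t ht =>
  let ⟨t', ht', hpq⟩ := h t ht
  ⟨t', ht', hφ.map_rel hpq⟩

end QPath

theorem CuAxioms.le_of_forall_wayBelow {T N : Type*} [AddCommMonoid T] [PartialOrder T]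
    [Preorder N] (hT : CuAxioms T) {α β : T → N} (hα : PreservesSeqSup α)
    (h : ∀ z x, WayBelow z x → α z ≤ β x) (x : T) : α x ≤ β x := by
  obtain ⟨s, hs, hx⟩ := hT.O2 x
  refine (hα s (monotone_nat_of_le_succ fun n => (hs n).le) x hx).2 ?_
  rintro _ ⟨n, rfl⟩
  exact h _ _ ((hs n).mono le_rfl (hx.1 ⟨n + 1, rfl⟩))

namespace Tau

open PathDom

variable {T M : Type*} [AddCommMonoid T] [PartialOrder T] [AddCommMonoid M] [PartialOrder M]
  {r : M → M → Prop} [IsQSemigroup M r]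

/-- `α z ≪ β x` whenever `z ≪ x`, since way-below in `τ(M)` only sees the endpoint of the
smaller element. -/
theorem cuHom_ext (hT : CuAxioms T) {α β : T → Tau M r} (hα : IsCuHom α) (hβ : IsCuHom β)
    (h : ∀ x, (α x).endpoint = (β x).endpoint) : α = β := by
  have key : ∀ {α β : T → Tau M r}, IsCuHom β →
      (∀ x, (α x).endpoint = (β x).endpoint) → ∀ z x, WayBelow z x → α z ≤ β x := by
    intro α β hβ h z x hzx
    obtain ⟨g, hg⟩ := Quot.exists_rep (β x)
    have hβzx := hβ.map_wayBelow z x hzx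
    rw [← hg] at hβzx ⊢
    obtain ⟨t, ht, hle⟩ := wayBelow_mk_iff.1 hβzx
    exact (wayBelow_mk_iff.2 ⟨t, ht, (h z).trans_le hle⟩).le
  exact funext fun x => le_antisymm (hT.le_of_forall_wayBelow hα.map_seqSup (key hβ h) x)
    (hT.le_of_forall_wayBelow hβ.map_seqSup (key hα fun x => (h x).symm) x)

section Lift

variable (hT : CuAxioms T) {φ : T → M} (hφ : IsQHom_s2 WayBelow r φ)

noncomputable def lift (x : T) : Tau M r := mk ((hT.exists_path_endpoint_eq x).choose.map hφ)

theorem mk_map_eq_lift {p : QPath T WayBelow} {x : T} (hp : p.endpoint = x) :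
    mk (p.map hφ) = lift hT hφ x := by
  have hx := (hT.exists_path_endpoint_eq x).choose_spec
  exact le_antisymm (mk_le_mk.2 ((QPath.LE_of_endpoint_le (hp.trans hx.symm).le).map hφ))
    (mk_le_mk.2 ((QPath.LE_of_endpoint_le (hx.trans hp.symm).le).map hφ))

theorem endpoint_lift (x : T) : (lift hT hφ x).endpoint = φ x :=
  congrArg φ (hT.exists_path_endpoint_eq x).choose_spec

theorem lift_mono : Monotone (lift hT hφ) := fun x y hxy => by
  obtain ⟨p, rfl⟩ := hT.exists_path_endpoint_eq x
  obtain ⟨q, rfl⟩ := hT.exists_path_endpoint_eq y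
  rw [← mk_map_eq_lift hT hφ rfl, ← mk_map_eq_lift hT hφ rfl]
  exact mk_le_mk.2 ((QPath.LE_of_endpoint_le hxy).map hφ)

theorem lift_zero : lift hT hφ 0 = 0 := by
  have := hT.isQSemigroup
  rw [← mk_map_eq_lift hT hφ (p := QPath.zero) (x := 0) rfl, zero_eq_mk]
  exact congrArg mk (QPath.ext' fun _ => hφ.map_zero)

theorem lift_add (x y : T) : lift hT hφ (x + y) = lift hT hφ x + lift hT hφ y := by
  have := hT.isQSemigroup
  obtain ⟨p, rfl⟩ := hT.exists_path_endpoint_eq x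
  obtain ⟨q, rfl⟩ := hT.exists_path_endpoint_eq y
  rw [← mk_map_eq_lift hT hφ (p := p.add q) (x := p.endpoint + q.endpoint) rfl,
    ← mk_map_eq_lift hT hφ rfl, ← mk_map_eq_lift hT hφ rfl, mk_add_mk]
  exact congrArg mk (QPath.ext' fun _ => hφ.map_add _ _)

theorem lift_wayBelow {x y : T} (h : WayBelow x y) : WayBelow (lift hT hφ x) (lift hT hφ y) := by
  obtain ⟨q, rfl⟩ := hT.exists_path_endpoint_eq y
  rw [← mk_map_eq_lift hT hφ rfl]
  obtain ⟨u, hu, hxu⟩ := q.exists_le_of_wayBelow_endpoint h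
  exact wayBelow_mk_iff.2 ⟨u, hu, (endpoint_lift hT hφ x).trans_le (hφ.mono hxu)⟩

theorem lift_seqSup : PreservesSeqSup (lift hT hφ) := by
  intro s hs a ha
  refine ⟨?_, Tau.ind fun h hh => ?_⟩
  · rintro _ ⟨n, rfl⟩
    exact lift_mono hT hφ (ha.1 ⟨n, rfl⟩)
  obtain ⟨p, rfl⟩ := hT.exists_path_endpoint_eq a
  rw [← mk_map_eq_lift hT hφ rfl]
  refine mk_le_mk.2 fun t ht => ?_
  obtain ⟨n, hn⟩ := p.wayBelow_endpoint (half_neg ht) s hs _ ha le_rfl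
  obtain ⟨q, hq⟩ := hT.exists_path_endpoint_eq (s n)
  obtain ⟨u, hu, hpq⟩ :=
    q.exists_le_of_wayBelow_endpoint ((p.rel_half ht).mono le_rfl (hq ▸ hn))
  have hqh : lift hT hφ (s n) ≤ mk h := hh ⟨n, rfl⟩
  rw [← mk_map_eq_lift hT hφ hq] at hqh
  obtain ⟨t', ht', hrel⟩ := mk_le_mk.1 hqh u hu
  exact ⟨t', ht', rel_of_le_of_rel (hφ.mono hpq) hrel⟩

theorem isCuHom_lift : IsCuHom (lift hT hφ) :=
  ⟨⟨lift_zero hT hφ, lift_add hT hφ, lift_mono hT hφ⟩, fun _ _ => lift_wayBelow hT hφ,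
    lift_seqSup hT hφ⟩

end Lift

theorem existsUnique_lift (hT : CuAxioms T) {φ : T → M} (hφ : IsQHom_s2 WayBelow r φ) :
    ∃! α : T → Tau M r, IsCuHom α ∧ ∀ x, (α x).endpoint = φ x :=
  ⟨lift hT hφ, ⟨isCuHom_lift hT hφ, endpoint_lift hT hφ⟩, fun _ hα =>
    cuHom_ext hT hα.1 (isCuHom_lift hT hφ) fun x =>
      (hα.2 x).trans (endpoint_lift hT hφ x).symm⟩

end Tau

namespace compatSubmonoidCu

variable {I : Type u} [SmallCategory I] (F : I ⥤ CuCat.{u})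

theorem isLUB_of_forall_isLUB_apply {s : ℕ → compatSubmonoidCu F} {a : compatSubmonoidCu F}
    (h : ∀ i, IsLUB (range fun n => (s n).1 i) (a.1 i)) : IsLUB (range s) a :=
  ⟨by rintro _ ⟨n, rfl⟩ i; exact (h i).1 ⟨n, rfl⟩,
    fun _ hb i => (h i).2 (by rintro _ ⟨n, rfl⟩; exact hb ⟨n, rfl⟩ i)⟩

theorem exists_isLUB_apply {s : ℕ → compatSubmonoidCu F} (hs : Monotone s) :
    ∃ a : compatSubmonoidCu F, ∀ i, IsLUB (range fun n => (s n).1 i) (a.1 i) := by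
  have hsi : ∀ i, Monotone fun n => (s n).1 i := fun i _ _ h => hs h i
  choose a ha using fun i => (F.obj i).cu.O1 _ (hsi i)
  refine ⟨⟨a, fun i j g => ?_⟩, ha⟩
  have hmap := (F.map g).2.map_seqSup _ (hsi i) _ (ha i)
  simp only [(s _).2 i j g] at hmap
  exact hmap.unique (ha j)

theorem isLUB_apply {s : ℕ → compatSubmonoidCu F} (hs : Monotone s) {a : compatSubmonoidCu F}
    (ha : IsLUB (range s) a) (i : I) : IsLUB (range fun n => (s n).1 i) (a.1 i) := by
  obtain ⟨a', ha'⟩ := exists_isLUB_apply F hs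
  rw [ha.unique (isLUB_of_forall_isLUB_apply F ha')]
  exact ha' i

instance : IsQSemigroup (compatSubmonoidCu F) (cuRelPW F) where
  add_le_add_left _ _ h _ i := (F.obj i).cu.add_le_add_left _ _ (h i) _
  zero_le _ i := (F.obj i).cu.zero_le _
  le_of_rel h i := (h i).le
  rel_of_le_of_rel_of_le hx h hy i := (h i).mono (hx i) (hy i)
  seqSupExists _ hs :=
    let ⟨a, ha⟩ := exists_isLUB_apply F hs
    ⟨a, isLUB_of_forall_isLUB_apply F ha⟩
  seqSupAdditive _ _ hs ht _ _ ha hb := isLUB_of_forall_isLUB_apply F fun i =>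
    (F.obj i).cu.O4 _ _ (fun _ _ h => hs h i) (fun _ _ h => ht h i) _ _
      (isLUB_apply F hs ha i) (isLUB_apply F ht hb i)
  zero_rel _ i := (F.obj i).cu.wayBelow_zero _
  add_rel h h' i := (F.obj i).cu.O3 _ _ _ _ (h i) (h' i)

theorem isQHom_eval (i : I) :
    IsQHom_s2 (cuRelPW F) WayBelow fun x : compatSubmonoidCu F => x.1 i where
  map_zero := rfl
  map_add _ _ := rfl
  mono _ _ h := h i
  map_rel h := h i
  map_seqSup _ hs _ ha := isLUB_apply F hs ha i

theorem isQHom_mk {T : Type*} [AddCommMonoid T] [PartialOrder T]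
    {σ : ∀ i, T → (F.obj i).carrier} (hσ : ∀ i, IsCuHom (σ i))
    (hcomp : ∀ (i j : I) (g : i ⟶ j) (x : T), (F.map g).1 (σ i x) = σ j x) :
    IsQHom_s2 WayBelow (cuRelPW F)
      fun x => (⟨fun i => σ i x, fun i j g => hcomp i j g x⟩ : compatSubmonoidCu F) where
  map_zero := Subtype.ext (funext fun i => (hσ i).map_zero)
  map_add _ _ := Subtype.ext (funext fun i => (hσ i).map_add _ _)
  mono _ _ h i := (hσ i).mono h
  map_rel h i := (hσ i).map_wayBelow _ _ h
  map_seqSup s hs a ha := isLUB_of_forall_isLUB_apply F fun i => (hσ i).map_seqSup s hs a ha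

end compatSubmonoidCu

section Limit

open Limits
open scoped Tau

variable {I : Type u} [SmallCategory I] (F : I ⥤ CuCat.{u})

theorem TauLim.existsUnique_lift {T : Type*} [AddCommMonoid T] [PartialOrder T] (hT : CuAxioms T)
    (σ : ∀ i, T → (F.obj i).carrier) (hσ : ∀ i, IsCuHom (σ i))
    (hcomp : ∀ (i j : I) (g : i ⟶ j) (x : T), (F.map g).1 (σ i x) = σ j x) :
    ∃! α : T → TauLim F, IsCuHom α ∧ ∀ i x, (Tau.endpoint (α x)).1 i = σ i x := by
  obtain ⟨α, hα, huniq⟩ := Tau.existsUnique_lift hT (compatSubmonoidCu.isQHom_mk F hσ hcomp)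
  exact ⟨α, ⟨hα.1, fun i x => congrFun (congrArg Subtype.val (hα.2 x)) i⟩, fun β hβ =>
    huniq β ⟨hβ.1, fun x => Subtype.ext (funext fun i => hβ.2 i x)⟩⟩

noncomputable def tauLimCone : Cone F where
  pt := ⟨TauLim F, Tau.cuAxioms⟩
  π :=
    { app i := ⟨fun x => (Tau.endpoint x).1 i,
        ((compatSubmonoidCu.isQHom_eval F i).comp Tau.isQHom_endpoint).isCuHom⟩
      naturality _ _ g := Subtype.ext (funext fun x => ((Tau.endpoint x).2 _ _ g).symm) }

noncomputable def tauLimConeIsLimit : IsLimit (tauLimCone F) :=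
  IsLimit.ofExistsUnique fun c => by
    obtain ⟨α, hα, huniq⟩ := TauLim.existsUnique_lift F c.pt.cu (fun i => (c.π.app i).1)
      (fun i => (c.π.app i).2) (fun _ _ g x => congrFun (congrArg Subtype.val (c.w g)) x)
    exact ⟨⟨α, hα.1⟩, fun i => Subtype.ext (funext (hα.2 i)), fun β hβ =>
      Subtype.ext (huniq β.1 ⟨β.2, fun i x => congrFun (congrArg Subtype.val (hβ i)) x⟩)⟩

end Limit

/-- **The category Cu is complete**, and the limit of `F : I ⥤ Cu` is the
`τ`-completion `τ(S)` of the limit `S` of `F` in `Q` (the compatible families with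
the componentwise way-below relation), together with the endpoint-induced morphisms
`ψ_i = τ(π_i)`. -/
theorem cu_complete :
    (∀ (I : Type u) (_ : SmallCategory I) (F : I ⥤ CuCat.{u}), Limits.HasLimit F) ∧
    ∀ (I : Type u) (_ : SmallCategory I) (F : I ⥤ CuCat.{u}),
      ∃ (_ : AddCommMonoid (TauLim F)) (_ : PartialOrder (TauLim F)),
        (∀ f g : QPath ↥(compatSubmonoidCu F) (cuRelPW F),
          Tau.mk f ≤ Tau.mk g ↔ QPath.LE f g) ∧
        (∀ f g h : QPath ↥(compatSubmonoidCu F) (cuRelPW F),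
          (∀ t, h.toFun t = f.toFun t + g.toFun t) →
          (Tau.mk f + Tau.mk g : TauLim F) = Tau.mk h) ∧
        (∀ h : QPath ↥(compatSubmonoidCu F) (cuRelPW F),
          (∀ t, h.toFun t = 0) → (0 : TauLim F) = Tau.mk h) ∧
        CuAxioms (TauLim F) ∧
        ∃ ψ : ∀ i : I, TauLim F → (F.obj i).carrier,
          (∀ i, IsCuHom (ψ i)) ∧
          (∀ (i : I) (f : QPath ↥(compatSubmonoidCu F) (cuRelPW F)),
            ψ i (Tau.mk f) = (f.toFun ⟨0, le_refl 0⟩).1 i) ∧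
          (∀ (i j : I) (g : i ⟶ j) (x : TauLim F), (F.map g).1 (ψ i x) = ψ j x) ∧
          ∀ (T : Type u) [AddCommMonoid T] [PartialOrder T], CuAxioms T →
            ∀ σ : ∀ i : I, T → (F.obj i).carrier,
              (∀ i, IsCuHom (σ i)) →
              (∀ (i j : I) (g : i ⟶ j) (x : T), (F.map g).1 (σ i x) = σ j x) →
              ∃! α : T → TauLim F, IsCuHom α ∧ ∀ (i : I) (x : T), ψ i (α x) = σ i x := by
  refine ⟨fun I _ F => ⟨⟨tauLimCone F, tauLimConeIsLimit F⟩⟩, fun I _ F => ?_⟩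
  refine ⟨Tau.instAddCommMonoid, Tau.instPartialOrder, fun f g => Tau.mk_le_mk, ?_, ?_,
    Tau.cuAxioms, fun i x => (Tau.endpoint x).1 i, fun i => ((tauLimCone F).π.app i).2,
    fun i f => rfl, fun i j g x => (Tau.endpoint x).2 i j g,
    fun T _ _ hT => TauLim.existsUnique_lift F hT⟩
  · intro f g h hfg
    rw [Tau.mk_add_mk]
    exact congrArg Tau.mk (QPath.ext' fun t => (hfg t).symm)
  · intro h h0
    exact congrArg Tau.mk (QPath.ext' fun t => (h0 t).symm)
end

section
/- Let S, T be W-semigroups and φ, ψ : S → T be W-morphisms. For x, y ∈ T set x ∼₀ y if there are z ∈ T and a, b ∈ S with x = z + φ(a) + ψ(b) and y = z + φ(b) + ψ(a), and let ∼ be the transitive closure of ∼₀; for x, y ∈ T set x ≾₀ y if there are a, b ∈ T with x ∼ a ≺ b ∼ y, and let ≾ be the transitive closure of ≾₀. Then: (i) ∼ is an additive congruence on T; (ii) ≾ is a transitive, additive relation; (iii) whenever u, x, y ∈ T satisfy u ≾ x ∼ y, there exists y' ∈ T with u ≾ y' ≺ y. -/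
/-!
STATEMENT 4: Let S, T be W-semigroups and φ, ψ : S → T W-morphisms.  With
x ∼₀ y iff x = z + φ(a) + ψ(b) and y = z + φ(b) + ψ(a) for some z, a, b, and
∼ the transitive closure of ∼₀; and x ≾₀ y iff x ∼ a ≺ b ∼ y for some a, b, and
≾ the transitive closure of ≾₀: (i) ∼ is an additive congruence on T; (ii) ≾ is a
transitive, additive relation; (iii) u ≾ x ∼ y implies u ≾ y' ≺ y for some y'.
-/

universe u v w

/-- The axioms of a `W`-semigroup: a commutative monoid with a transitive
auxiliary relation `≺` satisfying `0 ≺ x`, (W1), (W3) and (W4). -/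
structure WAxioms (M : Type u) [AddCommMonoid M] (r : M → M → Prop) : Prop where
  trans : ∀ {x y z : M}, r x y → r y z → r x z
  zero_rel : ∀ x : M, r 0 x
  W1 : ∀ x : M, ∃ s : ℕ → M, (∀ n, r (s n) (s (n + 1))) ∧ (∀ n, r (s n) x) ∧
        ∀ y : M, r y x → ∃ n, r y (s n)
  W3 : ∀ {x' x y' y : M}, r x' x → r y' y → r (x' + y') (x + y)
  W4 : ∀ {x y z : M}, r x (y + z) → ∃ y' z' : M, r y' y ∧ r z' z ∧ r x (y' + z')

/-- A `W`-morphism: preserves addition, `0` and the auxiliary relation, and is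
continuous: whenever `y ≺ f x` there is `x' ≺ x` with `y ≺ f x'`. -/
structure IsWHom {M : Type u} {N : Type v} [AddCommMonoid M] [AddCommMonoid N]
    (rM : M → M → Prop) (rN : N → N → Prop) (f : M → N) : Prop where
  map_zero : f 0 = 0
  map_add : ∀ x y : M, f (x + y) = f x + f y
  map_rel : ∀ {x y : M}, rM x y → rN (f x) (f y)
  cont : ∀ (x : M) (y : N), rN y (f x) → ∃ x' : M, rM x' x ∧ rN y (f x')

theorem WAxioms.transitive {M : Type u} [AddCommMonoid M] {r : M → M → Prop}
    (h : WAxioms M r) : Transitive r := fun _ _ _ hxy hyz => h.trans hxy hyz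

theorem isWHom_id {M : Type u} [AddCommMonoid M] {r : M → M → Prop} (h : WAxioms M r) :
    IsWHom r r (id : M → M) := by
  refine ⟨rfl, fun _ _ => rfl, fun hxy => hxy, ?_⟩
  intro x y hyx
  obtain ⟨s, _, hsx, hcof⟩ := h.W1 x
  obtain ⟨n, hn⟩ := hcof y hyx
  exact ⟨s n, hsx n, hn⟩

theorem IsWHom.comp {M : Type u} {N : Type v} {P : Type w} [AddCommMonoid M]
    [AddCommMonoid N] [AddCommMonoid P] {rM : M → M → Prop} {rN : N → N → Prop}
    {rP : P → P → Prop} (hP : Transitive rP) {g : N → P} {f : M → N}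
    (hg : IsWHom rN rP g) (hf : IsWHom rM rN f) : IsWHom rM rP (g ∘ f) := by
  refine ⟨?_, ?_, ?_, ?_⟩
  · show g (f 0) = 0
    rw [hf.map_zero, hg.map_zero]
  · intro x y
    show g (f (x + y)) = g (f x) + g (f y)
    rw [hf.map_add, hg.map_add]
  · exact fun hxy => hg.map_rel (hf.map_rel hxy)
  · intro x y hy
    obtain ⟨u, hu, hyu⟩ := hg.cont (f x) y hy
    obtain ⟨x', hx', hux'⟩ := hf.cont x u hu
    exact ⟨x', hx', hP hyu (hg.map_rel hux')⟩

/-- The category `W` of `W`-semigroups: objects are `W`-semigroups, morphisms are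
`W`-morphisms. -/
structure WCat : Type (u + 1) where
  carrier : Type u
  [addCommMonoid : AddCommMonoid carrier]
  rel : carrier → carrier → Prop
  ax : WAxioms carrier rel

attribute [instance] WCat.addCommMonoid

instance : CategoryTheory.Category WCat.{u} where
  Hom S T := { f : S.carrier → T.carrier // IsWHom S.rel T.rel f }
  id S := ⟨id, isWHom_id S.ax⟩
  comp := fun {X Y Z} f g =>
    ⟨g.1 ∘ f.1, g.2.comp Z.ax.transitive f.2⟩

section

variable {S T : Type u} [AddCommMonoid S] [AddCommMonoid T]

/-- The relation `∼₀`. -/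
def SimZero (φ ψ : S → T) (x y : T) : Prop :=
  ∃ z : T, ∃ a b : S, x = z + φ a + ψ b ∧ y = z + φ b + ψ a

/-- The relation `∼`: the transitive closure of `∼₀`. -/
def Sim (φ ψ : S → T) : T → T → Prop := Relation.TransGen (SimZero φ ψ)

/-- The relation `≾₀`: `x ≾₀ y` iff `x ∼ a ≺ b ∼ y` for some `a, b`. -/
def WSubZero (rT : T → T → Prop) (φ ψ : S → T) (x y : T) : Prop :=
  ∃ a b : T, Sim φ ψ x a ∧ rT a b ∧ Sim φ ψ b y

/-- The relation `≾`: the transitive closure of `≾₀`. -/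
def WSub (rT : T → T → Prop) (φ ψ : S → T) : T → T → Prop :=
  Relation.TransGen (WSubZero rT φ ψ)

/-!
Both `∼` and `≾` are transitive closures of additive relations, and additivity passes to the
transitive closure as soon as the generating relation interpolates, since a chain can then be
lengthened to match another one. `∼₀` interpolates because it is reflexive, `≾₀` because `≺` does
by (W1). For (iii), (W4) and the continuity of `φ`, `ψ` move a `≺`-predecessor of `z + φ p + ψ q`
below some `z₁ + φ p' + ψ q'` with `p' ≺ p`, `q' ≺ q`, whose swap `z₁ + φ q' + ψ p'` lies below
`z + φ q + ψ p`; iterating this along a `∼`-chain gives the claim.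
-/

namespace Relation.TransGen

variable {α : Type*} {r : α → α → Prop} {a c : α}

theorem exists_tail_of_exists_between (hbtw : ∀ {x y}, r x y → ∃ m, r x m ∧ r m y)
    (h : TransGen r a c) : ∃ b, TransGen r a b ∧ r b c := by
  cases h with
  | single h =>
      obtain ⟨m, ham, hmc⟩ := hbtw h
      exact ⟨m, single ham, hmc⟩
  | tail h hbc => exact ⟨_, h, hbc⟩

variable [Add α] {x y u v : α}

theorem add_of_rel (hadd : ∀ {x y u v}, r x y → r u v → r (x + u) (y + v))
    (hbtw : ∀ {x y}, r x y → ∃ m, r x m ∧ r m y)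
    (hxy : r x y) (huv : TransGen r u v) : TransGen r (x + u) (y + v) := by
  induction huv generalizing y with
  | single huv => exact single (hadd hxy huv)
  | tail _ hv ih =>
      obtain ⟨m, hxm, hmy⟩ := hbtw hxy
      exact tail (ih hxm) (hadd hmy hv)

theorem add (hadd : ∀ {x y u v}, r x y → r u v → r (x + u) (y + v))
    (hbtw : ∀ {x y}, r x y → ∃ m, r x m ∧ r m y)
    (hxy : TransGen r x y) (huv : TransGen r u v) : TransGen r (x + u) (y + v) := by
  induction hxy generalizing v with
  | single hxy => exact add_of_rel hadd hbtw hxy huv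
  | tail _ hy ih =>
      obtain ⟨m, hum, hmv⟩ := exists_tail_of_exists_between hbtw huv
      exact tail (ih hum) (hadd hy hmv)

end Relation.TransGen

theorem WAxioms.exists_between {M : Type u} [AddCommMonoid M] {r : M → M → Prop}
    (h : WAxioms M r) {a b : M} (hab : r a b) : ∃ m, r a m ∧ r m b := by
  obtain ⟨s, _, hsb, hcof⟩ := h.W1 b
  obtain ⟨n, hn⟩ := hcof a hab
  exact ⟨s n, hn, hsb n⟩

variable {rS : S → S → Prop} {rT : T → T → Prop} {φ ψ : S → T}

theorem simZero_refl (hφ : IsWHom rS rT φ) (hψ : IsWHom rS rT ψ) (x : T) :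
    SimZero φ ψ x x :=
  ⟨x, 0, 0, by simp [hφ.map_zero, hψ.map_zero], by simp [hφ.map_zero, hψ.map_zero]⟩

theorem simZero_add (hφ : IsWHom rS rT φ) (hψ : IsWHom rS rT ψ) {x y u v : T} :
    SimZero φ ψ x y → SimZero φ ψ u v → SimZero φ ψ (x + u) (y + v)
  | ⟨z, a, b, hx, hy⟩, ⟨w, c, d, hu, hv⟩ =>
    ⟨z + w, a + c, b + d,
      by rw [hx, hu, hφ.map_add, hψ.map_add]; abel,
      by rw [hy, hv, hφ.map_add, hψ.map_add]; abel⟩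

theorem sim_refl (hφ : IsWHom rS rT φ) (hψ : IsWHom rS rT ψ) (x : T) : Sim φ ψ x x :=
  .single (simZero_refl hφ hψ x)

theorem sim_equivalence (hφ : IsWHom rS rT φ) (hψ : IsWHom rS rT ψ) :
    Equivalence (Sim φ ψ) :=
  ⟨sim_refl hφ hψ,
    fun h => Relation.transGen_swap.mp
      (Relation.TransGen.mono (fun _ _ ⟨z, a, b, hx, hy⟩ => ⟨z, b, a, hy, hx⟩) _ _ h),
    .trans⟩

theorem sim_add (hφ : IsWHom rS rT φ) (hψ : IsWHom rS rT ψ) {x y u v : T}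
    (hxy : Sim φ ψ x y) (huv : Sim φ ψ u v) : Sim φ ψ (x + u) (y + v) :=
  hxy.add (simZero_add hφ hψ) (fun h => ⟨_, simZero_refl hφ hψ _, h⟩) huv

theorem wsubZero_add (hT : WAxioms T rT) (hφ : IsWHom rS rT φ) (hψ : IsWHom rS rT ψ)
    {x y u v : T} :
    WSubZero rT φ ψ x y → WSubZero rT φ ψ u v → WSubZero rT φ ψ (x + u) (y + v)
  | ⟨a, b, hxa, hab, hby⟩, ⟨c, d, huc, hcd, hdv⟩ =>
    ⟨a + c, b + d, sim_add hφ hψ hxa huc, hT.W3 hab hcd, sim_add hφ hψ hby hdv⟩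

theorem WSubZero.exists_between (hT : WAxioms T rT) (hφ : IsWHom rS rT φ)
    (hψ : IsWHom rS rT ψ) {x y : T} :
    WSubZero rT φ ψ x y → ∃ m, WSubZero rT φ ψ x m ∧ WSubZero rT φ ψ m y
  | ⟨a, b, hxa, hab, hby⟩ =>
    have ⟨m, ham, hmb⟩ := hT.exists_between hab
    ⟨m, ⟨a, m, hxa, ham, sim_refl hφ hψ m⟩, ⟨m, b, sim_refl hφ hψ m, hmb, hby⟩⟩

theorem wsub_add (hT : WAxioms T rT) (hφ : IsWHom rS rT φ) (hψ : IsWHom rS rT ψ)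
    {x y u v : T} (hxy : WSub rT φ ψ x y) (huv : WSub rT φ ψ u v) :
    WSub rT φ ψ (x + u) (y + v) :=
  hxy.add (wsubZero_add hT hφ hψ) (WSubZero.exists_between hT hφ hψ) huv

theorem exists_rel_simZero_rel (hT : WAxioms T rT) (hφ : IsWHom rS rT φ)
    (hψ : IsWHom rS rT ψ) {a b c : T} (hab : rT a b) (hbc : SimZero φ ψ b c) :
    ∃ d c', rT a d ∧ SimZero φ ψ d c' ∧ rT c' c := by
  obtain ⟨z, p, q, rfl, rfl⟩ := hbc
  obtain ⟨e, v, he, hv, hav⟩ := hT.W4 hab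
  obtain ⟨z', u', hz', hu', heu⟩ := hT.W4 he
  obtain ⟨p', hp', hup⟩ := hφ.cont p u' hu'
  obtain ⟨q', hq', hvq⟩ := hψ.cont q v hv
  obtain ⟨z₁, hz'z₁, hz₁z⟩ := hT.exists_between hz'
  refine ⟨z₁ + φ p' + ψ q', z₁ + φ q' + ψ p', ?_, ⟨z₁, p', q', rfl, rfl⟩, ?_⟩
  · exact hT.trans hav (hT.W3 (hT.trans heu (hT.W3 hz'z₁ hup)) hvq)
  · exact hT.W3 (hT.W3 hz₁z (hφ.map_rel hq')) (hψ.map_rel hp')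

theorem exists_wsub_rel_of_sim_of_rel_of_sim (hT : WAxioms T rT) (hφ : IsWHom rS rT φ)
    (hψ : IsWHom rS rT ψ) {w a b c : T} (hwa : Sim φ ψ w a) (hab : rT a b)
    (hbc : Sim φ ψ b c) : ∃ c', WSub rT φ ψ w c' ∧ rT c' c := by
  induction hbc using Relation.TransGen.head_induction_on generalizing w a with
  | single hbc =>
      obtain ⟨d, c', had, hdc', hc'c⟩ := exists_rel_simZero_rel hT hφ hψ hab hbc
      exact ⟨c', .single ⟨a, d, hwa, had, .single hdc'⟩, hc'c⟩
  | head hbb₁ _ ih =>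
      obtain ⟨d, b₁', had, hdb₁', hb₁'⟩ := exists_rel_simZero_rel hT hφ hψ hab hbb₁
      obtain ⟨c', hb₁'c', hc'c⟩ := ih (sim_refl hφ hψ b₁') hb₁'
      exact ⟨c', .head ⟨a, d, hwa, had, .single hdb₁'⟩ hb₁'c', hc'c⟩

theorem exists_wsub_rel_of_wsub_of_sim (hT : WAxioms T rT) (hφ : IsWHom rS rT φ)
    (hψ : IsWHom rS rT ψ) {u x y : T} (hux : WSub rT φ ψ u x) (hxy : Sim φ ψ x y) :
    ∃ y', WSub rT φ ψ u y' ∧ rT y' y := by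
  obtain ⟨w, huw, a, b, hwa, hab, hbx⟩ := Relation.TransGen.tail'_iff.mp hux
  obtain ⟨y', hwy', hy'y⟩ :=
    exists_wsub_rel_of_sim_of_rel_of_sim hT hφ hψ hwa hab (hbx.trans hxy)
  exact ⟨y', Relation.TransGen.trans_right huw hwy', hy'y⟩

theorem sim_wsub_lemma_general (rS : S → S → Prop) (rT : T → T → Prop)
    (hT : WAxioms T rT) (φ ψ : S → T)
    (hφ : IsWHom rS rT φ) (hψ : IsWHom rS rT ψ) :
    (Equivalence (Sim φ ψ) ∧
      ∀ x y u v : T, Sim φ ψ x y → Sim φ ψ u v → Sim φ ψ (x + u) (y + v)) ∧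
    (Transitive (WSub rT φ ψ) ∧
      ∀ x y u v : T, WSub rT φ ψ x y → WSub rT φ ψ u v →
        WSub rT φ ψ (x + u) (y + v)) ∧
    (∀ u x y : T, WSub rT φ ψ u x → Sim φ ψ x y →
      ∃ y' : T, WSub rT φ ψ u y' ∧ rT y' y) :=
  ⟨⟨sim_equivalence hφ hψ, fun _ _ _ _ => sim_add hφ hψ⟩,
    ⟨fun _ _ _ => .trans, fun _ _ _ _ => wsub_add hT hφ hψ⟩,
    fun _ _ _ => exists_wsub_rel_of_wsub_of_sim hT hφ hψ⟩

/-- **Lemma (preparation for coequalizers in W).** -/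
theorem sim_wsub_lemma (rS : S → S → Prop) (rT : T → T → Prop)
    (hS : WAxioms S rS) (hT : WAxioms T rT) (φ ψ : S → T)
    (hφ : IsWHom rS rT φ) (hψ : IsWHom rS rT ψ) :
    (Equivalence (Sim φ ψ) ∧
      ∀ x y u v : T, Sim φ ψ x y → Sim φ ψ u v → Sim φ ψ (x + u) (y + v)) ∧
    (Transitive (WSub rT φ ψ) ∧
      ∀ x y u v : T, WSub rT φ ψ x y → WSub rT φ ψ u v →
        WSub rT φ ψ (x + u) (y + v)) ∧
    (∀ u x y : T, WSub rT φ ψ u x → Sim φ ψ x y →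
      ∃ y' : T, WSub rT φ ψ u y' ∧ rT y' y) :=
  sim_wsub_lemma_general rS rT hT φ ψ hφ hψ

end
end

section
/- The category Cu is a full, reflective subcategory of the category W. Concretely, for every W-semigroup S the canonical W-morphism α_S : S → γ(S) into the Cu-completion (sending x to the class of a ≺-increasing sequence cofinal in {x' : x' ≺ x}) is universal: for every Cu-semigroup T, the map sending a Cu-morphism φ : γ(S) → T to φ ∘ α_S is a bijection from the set of Cu-morphisms γ(S) → T onto the set of W-morphisms S → T (where T is regarded as a W-semigroup via its way-below relation ≪). -/
/-!
STATEMENT 8: The category Cu is a full, reflective subcategory of the category W.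
Concretely, for every W-semigroup S the canonical W-morphism α_S : S → γ(S) into the
Cu-completion (sending x to the class of a ≺-increasing sequence cofinal in
{x' : x' ≺ x}) is universal: for every Cu-semigroup T, composition with α_S is a
bijection from Cu-morphisms γ(S) → T onto W-morphisms S → T (where T is regarded as
a W-semigroup via its way-below relation ≪).
-/

universe u v w

section Gamma

variable {M : Type u} (r : M → M → Prop)

/-- `r`-increasing sequences in `M`. -/
def RSeq : Type u := {s : ℕ → M // ∀ n, r (s n) (s (n + 1))}

/-- Domination of `r`-increasing sequences: `a ⊑ b` iff every entry of `a` is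
`r`-below some entry of `b`. -/
def RSeq.Sub (a b : RSeq r) : Prop := ∀ k, ∃ l, r (a.1 k) (b.1 l)

/-- Mutual domination of `r`-increasing sequences. -/
def RSeq.Equiv (a b : RSeq r) : Prop := RSeq.Sub r a b ∧ RSeq.Sub r b a

/-- The Cu-completion `γ(M, r)`: equivalence classes of `r`-increasing sequences. -/
def Gamma : Type u := Quot (RSeq.Equiv r)

/-- The class of an `r`-increasing sequence in the Cu-completion. -/
def Gamma.mk (a : RSeq r) : Gamma r := Quot.mk _ a

end Gamma

section CuWAux

open Set

/-- In a PoM, addition is monotone in both arguments. -/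
theorem PoMAxioms.add_mono' {N : Type v} [AddCommMonoid N] [PartialOrder N]
    (hp : PoMAxioms N) {a b c d : N} (h1 : a ≤ b) (h2 : c ≤ d) : a + c ≤ b + d := by
  calc a + c ≤ a + d := hp.add_le_add_left _ _ h2 a
    _ = d + a := add_comm _ _
    _ ≤ d + b := hp.add_le_add_left _ _ h1 d
    _ = b + d := add_comm _ _

/-- Fullness: a W-morphism between Cu-semigroups is a Cu-morphism. -/
theorem cu_full {A : Type u} {B : Type v} [AddCommMonoid A] [PartialOrder A]
    [AddCommMonoid B] [PartialOrder B] (_hA : CuAxioms A) (hB : CuAxioms B)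
    (g : A → B) (hg : IsWHom (WayBelow (M := A)) (WayBelow (M := B)) g) : IsCuHom g := by
  have mono : Monotone g := by
    intro x y hxy
    obtain ⟨b, hb, hlub⟩ := hB.O2 (g x)
    refine hlub.2 ?_
    rintro _ ⟨n, rfl⟩
    have hbn : WayBelow (b n) (g x) := (hb n).mono le_rfl (hlub.1 ⟨n + 1, rfl⟩)
    obtain ⟨x', hx', hbx'⟩ := hg.cont x (b n) hbn
    have hxy' : WayBelow (g x') (g y) := hg.map_rel (hx'.mono le_rfl hxy)
    exact hbx'.le.trans hxy'.le
  refine ⟨⟨hg.map_zero, hg.map_add, mono⟩, fun x y hxy => hg.map_rel hxy, ?_⟩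
  intro s hs a ha
  constructor
  · rintro _ ⟨n, rfl⟩
    exact mono (ha.1 ⟨n, rfl⟩)
  · intro u hu
    obtain ⟨b, hb, hlub⟩ := hB.O2 (g a)
    refine hlub.2 ?_
    rintro _ ⟨n, rfl⟩
    have hbn : WayBelow (b n) (g a) := (hb n).mono le_rfl (hlub.1 ⟨n + 1, rfl⟩)
    obtain ⟨a', ha', hba'⟩ := hg.cont a (b n) hbn
    obtain ⟨k, hk⟩ := ha' s hs a ha le_rfl
    exact hba'.le.trans ((mono hk).trans (hu ⟨k, rfl⟩))

/-- A Cu-morphism is a W-morphism for the way-below relations. -/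
theorem cuhom_is_whom {A : Type u} {B : Type v} [AddCommMonoid A] [PartialOrder A]
    [AddCommMonoid B] [PartialOrder B] (hA : CuAxioms A) {φ : A → B}
    (hφ : IsCuHom φ) : IsWHom (WayBelow (M := A)) (WayBelow (M := B)) φ := by
  refine ⟨hφ.map_zero, hφ.map_add, fun hxy => hφ.map_wayBelow _ _ hxy, ?_⟩
  intro x y hy
  obtain ⟨s, hs, hlub⟩ := hA.O2 x
  have hsm : Monotone s := monotone_nat_of_le_succ fun n => (hs n).le
  have hφlub : IsLUB (Set.range fun n => φ (s n)) (φ x) := hφ.map_seqSup s hsm x hlub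
  have hφm : Monotone fun n => φ (s n) := fun m n hmn => hφ.mono (hsm hmn)
  obtain ⟨n, hn⟩ := hy _ hφm _ hφlub le_rfl
  refine ⟨s (n + 1), (hs (n + 1)).mono le_rfl (hlub.1 ⟨n + 2, rfl⟩), ?_⟩
  exact (hφ.map_wayBelow _ _ (hs n)).mono hn le_rfl

namespace CuW

variable {M : Type u} [AddCommMonoid M] {r : M → M → Prop}

theorem rchain (h : WAxioms M r) (a : RSeq r) : ∀ {k l : ℕ}, k < l → r (a.1 k) (a.1 l) := by
  intro k l hkl
  induction l with
  | zero => omega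
  | succ n ih =>
    rcases Nat.lt_succ_iff_lt_or_eq.mp hkl with h' | h'
    · exact h.trans (ih h') (a.2 n)
    · subst h'; exact a.2 k

theorem sub_refl (a : RSeq r) : RSeq.Sub r a a := fun k => ⟨k + 1, a.2 k⟩

theorem sub_trans (h : WAxioms M r) {a b c : RSeq r} (hab : RSeq.Sub r a b)
    (hbc : RSeq.Sub r b c) : RSeq.Sub r a c := fun k => by
  obtain ⟨l, hl⟩ := hab k
  obtain ⟨m, hm⟩ := hbc l
  exact ⟨m, h.trans hl hm⟩

/-- Pointwise addition of `r`-increasing sequences. -/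
def radd (h : WAxioms M r) (a b : RSeq r) : RSeq r :=
  ⟨fun n => a.1 n + b.1 n, fun n => h.W3 (a.2 n) (b.2 n)⟩

theorem sub_add (h : WAxioms M r) {a a' b b' : RSeq r} (ha : RSeq.Sub r a a')
    (hb : RSeq.Sub r b b') : RSeq.Sub r (radd h a b) (radd h a' b') := fun k => by
  obtain ⟨l, hl⟩ := ha k
  obtain ⟨m, hm⟩ := hb k
  refine ⟨max l m + 1, ?_⟩
  exact h.W3 (h.trans hl (rchain h a' (Nat.lt_succ_of_le (le_max_left l m))))
    (h.trans hm (rchain h b' (Nat.lt_succ_of_le (le_max_right l m))))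

/-- The zero sequence. -/
def zseq (h : WAxioms M r) : RSeq r := ⟨fun _ => 0, fun _ => h.zero_rel 0⟩

theorem zseq_sub (h : WAxioms M r) (a : RSeq r) : RSeq.Sub r (zseq h) a :=
  fun _ => ⟨0, h.zero_rel _⟩

theorem sub_of_le (h : WAxioms M r) (f : ℕ → RSeq r)
    (hf : ∀ m, RSeq.Sub r (f m) (f (m + 1))) :
    ∀ {m n : ℕ}, m ≤ n → RSeq.Sub r (f m) (f n) := by
  intro m n hmn
  induction n with
  | zero => exact Nat.le_zero.mp hmn ▸ sub_refl _
  | succ k ih =>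
    rcases Nat.le_succ_iff.mp hmn with h' | h'
    · exact sub_trans h (ih h') (hf k)
    · subst h'; exact sub_refl _

theorem upper_aux (h : WAxioms M r) (f : ℕ → RSeq r)
    (hf : ∀ m, RSeq.Sub r (f m) (f (m + 1))) (K : ℕ) :
    ∀ n, ∃ i, ∀ j ≤ n, r ((f j).1 K) ((f n).1 i) := by
  intro n
  induction n with
  | zero =>
    refine ⟨K + 1, fun j hj => ?_⟩
    interval_cases j
    exact (f 0).2 K
  | succ n ih =>
    obtain ⟨i₀, hi₀⟩ := ih
    obtain ⟨l, hl⟩ := hf n i₀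
    refine ⟨max l K + 1, fun j hj => ?_⟩
    rcases Nat.le_succ_iff.mp hj with h' | h'
    · exact h.trans (hi₀ j h') (h.trans hl
        (rchain h (f (n + 1)) (Nat.lt_succ_of_le (le_max_left l K))))
    · subst h'
      exact rchain h (f (n + 1)) (Nat.lt_succ_of_le (le_max_right l K))

/-- The diagonal sequence dominating an increasing sequence of sequences. -/
theorem diag (h : WAxioms M r) (f : ℕ → RSeq r)
    (hf : ∀ m, RSeq.Sub r (f m) (f (m + 1))) :
    ∃ b : RSeq r, (∀ m, RSeq.Sub r (f m) b) ∧
      (∀ c : RSeq r, (∀ m, RSeq.Sub r (f m) c) → RSeq.Sub r b c) ∧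
      (∀ k, ∃ m i, b.1 k = (f m).1 i) := by
  have exStep : ∀ (n : ℕ) (prev : ℕ), ∃ i,
      (∀ j ≤ n + 1, r ((f j).1 (n + 1)) ((f (n + 1)).1 i)) ∧
      r ((f n).1 prev) ((f (n + 1)).1 i) := by
    intro n prev
    obtain ⟨i₁, hi₁⟩ := upper_aux h f hf (n + 1) (n + 1)
    obtain ⟨l', hl'⟩ := hf n prev
    refine ⟨max i₁ l' + 1, fun j hj => ?_, ?_⟩
    · exact h.trans (hi₁ j hj)
        (rchain h (f (n + 1)) (Nat.lt_succ_of_le (le_max_left i₁ l')))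
    · exact h.trans hl'
        (rchain h (f (n + 1)) (Nat.lt_succ_of_le (le_max_right i₁ l')))
  let idx : ℕ → ℕ := fun n => Nat.rec (Classical.choose (upper_aux h f hf 0 0))
    (fun n prev => Classical.choose (exStep n prev)) n
  have hidx0 : ∀ j ≤ 0, r ((f j).1 0) ((f 0).1 (idx 0)) :=
    Classical.choose_spec (upper_aux h f hf 0 0)
  have hidxS : ∀ n, (∀ j ≤ n + 1, r ((f j).1 (n + 1)) ((f (n + 1)).1 (idx (n + 1)))) ∧
      r ((f n).1 (idx n)) ((f (n + 1)).1 (idx (n + 1))) := fun n =>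
    Classical.choose_spec (exStep n (idx n))
  have hP : ∀ n, ∀ j ≤ n, r ((f j).1 n) ((f n).1 (idx n)) := by
    intro n
    cases n with
    | zero => exact hidx0
    | succ n => exact (hidxS n).1
  refine ⟨⟨fun n => (f n).1 (idx n), fun n => (hidxS n).2⟩, ?_, ?_, ?_⟩
  · intro m k
    refine ⟨max m (k + 1), ?_⟩
    have h1 : r ((f m).1 k) ((f m).1 (max m (k + 1))) :=
      rchain h (f m) (Nat.lt_of_lt_of_le (Nat.lt_succ_self k) (le_max_right m (k + 1)))
    exact h.trans h1 (hP (max m (k + 1)) m (le_max_left m (k + 1)))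
  · intro c hc k
    obtain ⟨l, hl⟩ := hc k (idx k)
    exact ⟨l, hl⟩
  · intro k
    exact ⟨k, idx k, rfl⟩

/-- The canonical cofinal sequence below `x`, from (W1). -/
noncomputable def aseq (h : WAxioms M r) (x : M) : RSeq r :=
  ⟨Classical.choose (h.W1 x), (Classical.choose_spec (h.W1 x)).1⟩

theorem aseq_rel (h : WAxioms M r) (x : M) (n : ℕ) : r ((aseq h x).1 n) x :=
  (Classical.choose_spec (h.W1 x)).2.1 n

theorem aseq_cofinal (h : WAxioms M r) (x : M) {y : M} (hy : r y x) :
    ∃ n, r y ((aseq h x).1 n) :=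
  (Classical.choose_spec (h.W1 x)).2.2 y hy

theorem aseq_sub_of_rel (h : WAxioms M r) {x y : M} (hxy : r x y) :
    RSeq.Sub r (aseq h x) (aseq h y) := fun k =>
  aseq_cofinal h y (h.trans (aseq_rel h x k) hxy)

theorem aseq_sub_self (h : WAxioms M r) (a : RSeq r) (n : ℕ) :
    RSeq.Sub r (aseq h (a.1 n)) a := fun k => ⟨n, aseq_rel h (a.1 n) k⟩

/-- Addition on the Cu-completion. -/
def gAdd (h : WAxioms M r) : Gamma r → Gamma r → Gamma r :=
  Quot.map₂ (radd h)
    (fun a _ _ hb => ⟨sub_add h (sub_refl a) hb.1, sub_add h (sub_refl a) hb.2⟩)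
    (fun _ _ b ha => ⟨sub_add h ha.1 (sub_refl b), sub_add h ha.2 (sub_refl b)⟩)

/-- The monoid structure on the Cu-completion. -/
def gACM (h : WAxioms M r) : AddCommMonoid (Gamma r) :=
  letI : Add (Gamma r) := ⟨gAdd h⟩
  letI : Zero (Gamma r) := ⟨Gamma.mk r (zseq h)⟩
  { add := (· + ·)
    zero := 0
    nsmul := nsmulRec
    add_assoc := by
      intro a b c
      induction a using Quot.ind with | _ a =>
      induction b using Quot.ind with | _ b =>
      induction c using Quot.ind with | _ c =>
      exact congrArg (Quot.mk _) (Subtype.ext (funext fun n => add_assoc _ _ _))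
    zero_add := by
      intro a
      induction a using Quot.ind with | _ a =>
      exact congrArg (Quot.mk _) (Subtype.ext (funext fun n => zero_add _))
    add_zero := by
      intro a
      induction a using Quot.ind with | _ a =>
      exact congrArg (Quot.mk _) (Subtype.ext (funext fun n => add_zero _))
    add_comm := by
      intro a b
      induction a using Quot.ind with | _ a =>
      induction b using Quot.ind with | _ b =>
      exact congrArg (Quot.mk _) (Subtype.ext (funext fun n => add_comm _ _)) }

/-- The order on the Cu-completion. -/
def gLE (h : WAxioms M r) : Gamma r → Gamma r → Prop :=
  Quot.lift₂ (RSeq.Sub r)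
    (fun _ _ _ hb => propext ⟨fun s => sub_trans h s hb.1, fun s => sub_trans h s hb.2⟩)
    (fun _ _ _ ha => propext ⟨fun s => sub_trans h ha.2 s, fun s => sub_trans h ha.1 s⟩)

/-- The partial order on the Cu-completion. -/
def gPO (h : WAxioms M r) : PartialOrder (Gamma r) where
  le := gLE h
  le_refl := by
    intro a
    induction a using Quot.ind with | _ a =>
    exact sub_refl a
  le_trans := by
    intro a b c
    induction a using Quot.ind with | _ a =>
    induction b using Quot.ind with | _ b =>
    induction c using Quot.ind with | _ c =>
    exact fun hab hbc => sub_trans h hab hbc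
  le_antisymm := by
    intro a b
    induction a using Quot.ind with | _ a =>
    induction b using Quot.ind with | _ b =>
    exact fun hab hba => Quot.sound ⟨hab, hba⟩

section GammaLevel

variable [AddCommMonoid (Gamma r)] [PartialOrder (Gamma r)]
variable (h : WAxioms M r)
variable (hle : ∀ a b : RSeq r, Gamma.mk r a ≤ Gamma.mk r b ↔ RSeq.Sub r a b)
variable (hadd : ∀ a b : RSeq r, Gamma.mk r a + Gamma.mk r b = Gamma.mk r (radd h a b))
variable (hzero : (0 : Gamma r) = Gamma.mk r (zseq h))

theorem exists_mk (x : Gamma r) : ∃ a : RSeq r, x = Gamma.mk r a := by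
  obtain ⟨a, ha⟩ := Quot.exists_rep x
  exact ⟨a, ha.symm⟩

include h hle

theorem lub_diag (σ : ℕ → Gamma r) (hσ : Monotone σ) :
    ∃ (f : ℕ → RSeq r) (b : RSeq r), (∀ m, σ m = Gamma.mk r (f m)) ∧
      (∀ m, RSeq.Sub r (f m) b) ∧ (∀ k, ∃ m i, b.1 k = (f m).1 i) ∧
      IsLUB (Set.range σ) (Gamma.mk r b) := by
  have hrep : ∀ m, ∃ a, σ m = Gamma.mk r a := fun m => exists_mk (σ m)
  choose f hf using hrep
  have hsub : ∀ m, RSeq.Sub r (f m) (f (m + 1)) := by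
    intro m
    have := hσ (Nat.le_succ m)
    rw [hf m, hf (m + 1)] at this
    exact (hle _ _).mp this
  obtain ⟨b, hb1, hb2, hb3⟩ := diag h f hsub
  refine ⟨f, b, hf, hb1, hb3, ?_, ?_⟩
  · rintro _ ⟨m, rfl⟩
    rw [hf m]
    exact (hle _ _).mpr (hb1 m)
  · intro u hu
    obtain ⟨c, rfl⟩ := exists_mk u
    refine (hle _ _).mpr (hb2 c fun m => (hle _ _).mp ?_)
    have := hu ⟨m, rfl⟩
    rwa [hf m] at this

theorem gO1 : SeqSupExists (Gamma r) := by
  intro σ hσ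
  obtain ⟨f, b, _, _, _, hlub⟩ := lub_diag h hle σ hσ
  exact ⟨_, hlub⟩

theorem alpha_mono (a : RSeq r) :
    Monotone fun n => Gamma.mk r (aseq h (a.1 n)) :=
  monotone_nat_of_le_succ fun n => (hle _ _).mpr (aseq_sub_of_rel h (a.2 n))

theorem alpha_lub (a : RSeq r) :
    IsLUB (Set.range fun n => Gamma.mk r (aseq h (a.1 n))) (Gamma.mk r a) := by
  constructor
  · rintro _ ⟨n, rfl⟩
    exact (hle _ _).mpr (aseq_sub_self h a n)
  · intro u hu
    obtain ⟨c, rfl⟩ := exists_mk u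
    refine (hle _ _).mpr fun k => ?_
    obtain ⟨j, hj⟩ := aseq_cofinal h (a.1 (k + 1)) (a.2 k)
    obtain ⟨l, hl⟩ := (hle _ _).mp (hu ⟨k + 1, rfl⟩) j
    exact ⟨l, h.trans hj hl⟩

theorem wb_of_bound {a b : RSeq r} (N : ℕ) (hN : ∀ k, r (a.1 k) (b.1 N)) :
    WayBelow (Gamma.mk r a) (Gamma.mk r b) := by
  intro σ hσ u hu hbu
  obtain ⟨f, b', hf, _, hent, hlub⟩ := lub_diag h hle σ hσ
  have hub : u = Gamma.mk r b' := hu.unique hlub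
  subst hub
  obtain ⟨l, hl⟩ := (hle _ _).mp hbu N
  obtain ⟨m, i, hmi⟩ := hent l
  refine ⟨m, ?_⟩
  rw [hf m]
  refine (hle _ _).mpr fun k => ⟨i, h.trans (hN k) ?_⟩
  rw [← hmi]
  exact hl

theorem alpha_wb {x y : M} (hxy : r x y) :
    WayBelow (Gamma.mk r (aseq h x)) (Gamma.mk r (aseq h y)) := by
  obtain ⟨N, hN⟩ := aseq_cofinal h y hxy
  exact wb_of_bound h hle N fun k => h.trans (aseq_rel h x k) hN

include hadd

theorem alpha_add (x y : M) :
    Gamma.mk r (aseq h (x + y)) = Gamma.mk r (aseq h x) + Gamma.mk r (aseq h y) := by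
  rw [hadd]
  refine Quot.sound ⟨fun k => ?_, fun k => ?_⟩
  · obtain ⟨x', y', hx', hy', hk⟩ := h.W4 (aseq_rel h (x + y) k)
    obtain ⟨i, hi⟩ := aseq_cofinal h x hx'
    obtain ⟨j, hj⟩ := aseq_cofinal h y hy'
    refine ⟨max i j + 1, ?_⟩
    have h1 : r x' ((aseq h x).1 (max i j + 1)) :=
      h.trans hi (rchain h _ (Nat.lt_succ_of_le (le_max_left i j)))
    have h2 : r y' ((aseq h y).1 (max i j + 1)) :=
      h.trans hj (rchain h _ (Nat.lt_succ_of_le (le_max_right i j)))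
    exact h.trans hk (h.W3 h1 h2)
  · exact aseq_cofinal h (x + y) (h.W3 (aseq_rel h x k) (aseq_rel h y k))

include hzero

theorem alpha_zero : (0 : Gamma r) = Gamma.mk r (aseq h 0) := by
  rw [hzero]
  exact Quot.sound ⟨zseq_sub h _, fun k => ⟨0, aseq_rel h 0 k⟩⟩

theorem gPoM : PoMAxioms (Gamma r) := by
  constructor
  · intro a b hab c
    obtain ⟨a, rfl⟩ := exists_mk a
    obtain ⟨b, rfl⟩ := exists_mk b
    obtain ⟨c, rfl⟩ := exists_mk c
    rw [hadd, hadd]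
    exact (hle _ _).mpr (sub_add h (sub_refl c) ((hle _ _).mp hab))
  · intro a
    obtain ⟨a, rfl⟩ := exists_mk a
    rw [hzero]
    exact (hle _ _).mpr (zseq_sub h a)

theorem gO2 : ∀ x : Gamma r, ∃ s : ℕ → Gamma r,
    (∀ n, WayBelow (s n) (s (n + 1))) ∧ IsLUB (Set.range s) x := by
  intro x
  obtain ⟨a, rfl⟩ := exists_mk x
  exact ⟨fun n => Gamma.mk r (aseq h (a.1 n)),
    fun n => alpha_wb h hle (a.2 n), alpha_lub h hle a⟩

theorem gO3 : ∀ x' x y' y : Gamma r, WayBelow x' x → WayBelow y' y →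
    WayBelow (x' + y') (x + y) := by
  intro x' x y' y hx hy
  obtain ⟨a, rfl⟩ := exists_mk x
  obtain ⟨b, rfl⟩ := exists_mk y
  obtain ⟨n, hn⟩ := hx _ (alpha_mono h hle a) _ (alpha_lub h hle a) le_rfl
  obtain ⟨m, hm⟩ := hy _ (alpha_mono h hle b) _ (alpha_lub h hle b) le_rfl
  have key : WayBelow (Gamma.mk r (aseq h (a.1 n + b.1 m)))
      (Gamma.mk r (aseq h (a.1 (n + 1) + b.1 (m + 1)))) :=
    alpha_wb h hle (h.W3 (a.2 n) (b.2 m))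
  refine key.mono ?_ ?_
  · rw [alpha_add h hle hadd]
    exact (gPoM h hle hadd hzero).add_mono' hn hm
  · rw [alpha_add h hle hadd]
    exact (gPoM h hle hadd hzero).add_mono'
      ((hle _ _).mpr (aseq_sub_self h a (n + 1)))
      ((hle _ _).mpr (aseq_sub_self h b (m + 1)))

theorem gO4 : SeqSupAdditive (Gamma r) := by
  intro s t hs ht a b ha hb
  obtain ⟨f, bs, hf, hfs, hfe, hlubs⟩ := lub_diag h hle s hs
  obtain ⟨e, bt, he, hes, hee, hlubt⟩ := lub_diag h hle t ht
  have ha' : a = Gamma.mk r bs := ha.unique hlubs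
  have hb' : b = Gamma.mk r bt := hb.unique hlubt
  subst ha' hb'
  rw [hadd]
  have hsubf : ∀ {m n : ℕ}, m ≤ n → RSeq.Sub r (f m) (f n) := by
    intro m n hmn
    refine (hle _ _).mp ?_
    rw [← hf, ← hf]
    exact hs hmn
  have hsube : ∀ {m n : ℕ}, m ≤ n → RSeq.Sub r (e m) (e n) := by
    intro m n hmn
    refine (hle _ _).mp ?_
    rw [← he, ← he]
    exact ht hmn
  constructor
  · rintro _ ⟨m, rfl⟩
    show s m + t m ≤ Gamma.mk r (radd h bs bt)
    rw [hf m, he m, hadd]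
    exact (hle _ _).mpr (sub_add h (hfs m) (hes m))
  · intro u hu
    obtain ⟨c, rfl⟩ := exists_mk u
    refine (hle _ _).mpr fun k => ?_
    obtain ⟨m, i, hmi⟩ := hfe k
    obtain ⟨m', i', hmi'⟩ := hee k
    obtain ⟨j, hj⟩ := hsubf (le_max_left m m') i
    obtain ⟨j', hj'⟩ := hsube (le_max_right m m') i'
    have h1 : r (bs.1 k) ((f (max m m')).1 (max j j' + 1)) := by
      rw [hmi]
      exact h.trans hj (rchain h _ (Nat.lt_succ_of_le (le_max_left j j')))
    have h2 : r (bt.1 k) ((e (max m m')).1 (max j j' + 1)) := by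
      rw [hmi']
      exact h.trans hj' (rchain h _ (Nat.lt_succ_of_le (le_max_right j j')))
    have h4 : Gamma.mk r (radd h (f (max m m')) (e (max m m'))) ≤ Gamma.mk r c := by
      rw [← hadd, ← hf (max m m'), ← he (max m m')]
      exact hu ⟨max m m', rfl⟩
    obtain ⟨l, hl⟩ := (hle _ _).mp h4 (max j j' + 1)
    exact ⟨l, h.trans (h.W3 h1 h2) hl⟩

theorem alpha_whom :
    IsWHom r (WayBelow (M := Gamma r)) (fun x => Gamma.mk r (aseq h x)) := by
  refine ⟨(alpha_zero h hle hadd hzero).symm,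
    fun x y => alpha_add h hle hadd x y,
    fun hxy => alpha_wb h hle hxy, ?_⟩
  intro x y hy
  obtain ⟨n, hn⟩ := hy _ (alpha_mono h hle (aseq h x)) _ (alpha_lub h hle (aseq h x)) le_rfl
  refine ⟨(aseq h x).1 (n + 1), aseq_rel h x (n + 1), ?_⟩
  exact (alpha_wb h hle ((aseq h x).2 n)).mono hn le_rfl

omit hadd hzero in
theorem alpha_cof (x : M) (t : RSeq r) (h1 : ∀ n, r (t.1 n) x)
    (h2 : ∀ y, r y x → ∃ n, r y (t.1 n)) :
    Gamma.mk r (aseq h x) = Gamma.mk r t :=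
  Quot.sound ⟨fun k => h2 _ (aseq_rel h x k), fun k => aseq_cofinal h x (h1 k)⟩

theorem phi_exists {T : Type v} [AddCommMonoid T] [PartialOrder T]
    (hT : CuAxioms T) (g : M → T) (hg : IsWHom r (WayBelow (M := T)) g) :
    ∃! φ : Gamma r → T, IsCuHom φ ∧ ∀ x, φ (Gamma.mk r (aseq h x)) = g x := by
  have hgm : ∀ a : RSeq r, Monotone fun n => g (a.1 n) :=
    fun a => monotone_nat_of_le_succ fun n => (hg.map_rel (a.2 n)).le
  have gsup : ∀ a : RSeq r, ∃ v, IsLUB (Set.range fun n => g (a.1 n)) v :=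
    fun a => hT.O1 _ (hgm a)
  choose v hv using gsup
  have hvle : ∀ {a b : RSeq r}, RSeq.Sub r a b → v a ≤ v b := by
    intro a b hab
    refine (hv a).2 ?_
    rintro _ ⟨k, rfl⟩
    obtain ⟨l, hl⟩ := hab k
    exact (hg.map_rel hl).le.trans ((hv b).1 ⟨l, rfl⟩)
  refine ⟨Quot.lift v (fun a b hab => le_antisymm (hvle hab.1) (hvle hab.2)), ?_, ?_⟩
  case refine_1 =>
    set φ : Gamma r → T :=
      Quot.lift v (fun a b hab => le_antisymm (hvle hab.1) (hvle hab.2)) with hφdef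
    have φmk : ∀ a : RSeq r, φ (Gamma.mk r a) = v a := fun a => rfl
    have φmono : Monotone φ := by
      intro x y hxy
      obtain ⟨a, rfl⟩ := exists_mk x
      obtain ⟨b, rfl⟩ := exists_mk y
      exact hvle ((hle _ _).mp hxy)
    have φalpha : ∀ x : M, φ (Gamma.mk r (aseq h x)) = g x := by
      intro x
      rw [φmk]
      refine (hv (aseq h x)).unique ?_
      constructor
      · rintro _ ⟨n, rfl⟩
        exact (hg.map_rel (aseq_rel h x n)).le
      · intro u hu
        obtain ⟨t, htwb, htlub⟩ := hT.O2 (g x)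
        refine htlub.2 ?_
        rintro _ ⟨m, rfl⟩
        have hm : WayBelow (t m) (g x) := (htwb m).mono le_rfl (htlub.1 ⟨m + 1, rfl⟩)
        obtain ⟨x', hx', htx'⟩ := hg.cont x (t m) hm
        obtain ⟨j, hj⟩ := aseq_cofinal h x hx'
        exact htx'.le.trans ((hg.map_rel hj).le.trans (hu ⟨j, rfl⟩))
    refine ⟨⟨⟨?_, ?_, φmono⟩, ?_, ?_⟩, φalpha⟩
    · -- map_zero
      rw [hzero, φmk]
      have hz : IsLUB (Set.range fun n : ℕ => g ((zseq h).1 n)) (0 : T) := by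
        have he : (fun n : ℕ => g ((zseq h).1 n)) = fun _ => (0 : T) :=
          funext fun n => hg.map_zero
        rw [he, Set.range_const]
        exact isLUB_singleton
      exact (hv (zseq h)).unique hz
    · -- map_add
      intro x y
      obtain ⟨a, rfl⟩ := exists_mk x
      obtain ⟨b, rfl⟩ := exists_mk y
      rw [hadd, φmk, φmk, φmk]
      refine (hv (radd h a b)).unique ?_
      have he : (fun n => g ((radd h a b).1 n)) = fun n => g (a.1 n) + g (b.1 n) :=
        funext fun n => hg.map_add _ _
      rw [he]
      exact hT.O4 _ _ (hgm a) (hgm b) _ _ (hv a) (hv b)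
    · -- map_wayBelow
      intro x y hxy
      obtain ⟨b, rfl⟩ := exists_mk y
      obtain ⟨N, hN⟩ := hxy _ (alpha_mono h hle b) _ (alpha_lub h hle b) le_rfl
      have h1 : φ x ≤ g (b.1 N) := by
        rw [← φalpha (b.1 N)]
        exact φmono hN
      have h2 : WayBelow (g (b.1 N)) (g (b.1 (N + 1))) := hg.map_rel (b.2 N)
      have h3 : g (b.1 (N + 1)) ≤ φ (Gamma.mk r b) := (hv b).1 ⟨N + 1, rfl⟩
      exact h2.mono h1 h3
    · -- map_seqSup
      intro σ hσ c hc
      obtain ⟨f, b, hf, _, hfe, hlub⟩ := lub_diag h hle σ hσ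
      have hcb : c = Gamma.mk r b := hc.unique hlub
      subst hcb
      constructor
      · rintro _ ⟨m, rfl⟩
        exact φmono (hc.1 ⟨m, rfl⟩)
      · intro u hu
        rw [φmk]
        refine (hv b).2 ?_
        rintro _ ⟨k, rfl⟩
        obtain ⟨m, i, hmi⟩ := hfe k
        have hgb : g (b.1 k) ≤ φ (σ m) := by
          rw [hmi, hf m, φmk]
          exact (hv (f m)).1 ⟨i, rfl⟩
        exact hgb.trans (hu ⟨m, rfl⟩)
  case refine_2 =>
    intro ψ hψ'
    obtain ⟨hψ, hψα⟩ := hψ'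
    funext x
    obtain ⟨a, rfl⟩ := exists_mk x
    have h1 : IsLUB (Set.range fun n => ψ (Gamma.mk r (aseq h (a.1 n))))
        (ψ (Gamma.mk r a)) :=
      hψ.map_seqSup _ (alpha_mono h hle a) _ (alpha_lub h hle a)
    have h2 : (fun n => ψ (Gamma.mk r (aseq h (a.1 n)))) = fun n => g (a.1 n) :=
      funext fun n => hψα (a.1 n)
    rw [h2] at h1
    exact h1.unique (hv a)

end GammaLevel

end CuW

end CuWAux

/-- **Cu is a full, reflective subcategory of W.**  Fullness: every W-morphism (with
respect to the way-below relations) between Cu-semigroups is a Cu-morphism.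
Reflectivity: for every W-semigroup S, the Cu-completion γ(S) is a Cu-semigroup (with
the expected addition and order) and the canonical W-morphism α : S → γ(S), sending
`x` to the class of a ≺-increasing sequence cofinal in `{x' | x' ≺ x}`, is such that
composition with α is a bijection `Cu(γ(S), T) ≅ W(S, T)` for every Cu-semigroup T,
i.e. every W-morphism `S → T` factors uniquely through α by a Cu-morphism. -/
theorem cu_reflective_in_w :
    (∀ (A B : Type u) [AddCommMonoid A] [PartialOrder A] [AddCommMonoid B] [PartialOrder B],
      CuAxioms A → CuAxioms B → ∀ g : A → B,
        IsWHom (WayBelow (M := A)) (WayBelow (M := B)) g → IsCuHom g) ∧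
    ∀ S : WCat.{u},
      ∃ (_ : AddCommMonoid (Gamma S.rel)) (_ : PartialOrder (Gamma S.rel)),
        (∀ a b : RSeq S.rel, Gamma.mk S.rel a ≤ Gamma.mk S.rel b ↔ RSeq.Sub S.rel a b) ∧
        (∀ a b c : RSeq S.rel, (∀ n, c.1 n = a.1 n + b.1 n) →
          Gamma.mk S.rel a + Gamma.mk S.rel b = Gamma.mk S.rel c) ∧
        (∀ c : RSeq S.rel, (∀ n, c.1 n = 0) → (0 : Gamma S.rel) = Gamma.mk S.rel c) ∧
        CuAxioms (Gamma S.rel) ∧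
        ∃ α : S.carrier → Gamma S.rel,
          IsWHom S.rel (WayBelow (M := Gamma S.rel)) α ∧
          (∀ (x : S.carrier) (t : RSeq S.rel), (∀ n, S.rel (t.1 n) x) →
            (∀ y : S.carrier, S.rel y x → ∃ n, S.rel y (t.1 n)) →
            α x = Gamma.mk S.rel t) ∧
          ∀ (T : Type u) [AddCommMonoid T] [PartialOrder T], CuAxioms T →
            (∀ φ : Gamma S.rel → T, IsCuHom φ →
              IsWHom S.rel (WayBelow (M := T)) (fun x => φ (α x))) ∧
            (∀ g : S.carrier → T, IsWHom S.rel (WayBelow (M := T)) g →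
              ∃! φ : Gamma S.rel → T, IsCuHom φ ∧ ∀ x, φ (α x) = g x) := by
  constructor
  · intro A B _ _ _ _ hA hB g hg
    exact cu_full hA hB g hg
  · intro S
    letI instACM : AddCommMonoid (Gamma S.rel) := CuW.gACM S.ax
    letI instPO : PartialOrder (Gamma S.rel) := CuW.gPO S.ax
    refine ⟨instACM, instPO, ?_⟩
    have hle : ∀ a b : RSeq S.rel,
        Gamma.mk S.rel a ≤ Gamma.mk S.rel b ↔ RSeq.Sub S.rel a b := fun a b => Iff.rfl
    have hadd : ∀ a b : RSeq S.rel,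
        Gamma.mk S.rel a + Gamma.mk S.rel b = Gamma.mk S.rel (CuW.radd S.ax a b) :=
      fun a b => rfl
    have hzero : (0 : Gamma S.rel) = Gamma.mk S.rel (CuW.zseq S.ax) := rfl
    have hCu : CuAxioms (Gamma S.rel) :=
      ⟨CuW.gPoM S.ax hle hadd hzero, CuW.gO1 S.ax hle,
        CuW.gO2 S.ax hle hadd hzero, CuW.gO3 S.ax hle hadd hzero,
        CuW.gO4 S.ax hle hadd hzero⟩
    refine ⟨hle, ?_, ?_, hCu, ?_⟩
    · intro a b c hc
      rw [hadd]
      exact (congrArg (Gamma.mk S.rel) (Subtype.ext (funext hc))).symm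
    · intro c hc
      rw [hzero]
      exact (congrArg (Gamma.mk S.rel) (Subtype.ext (funext hc))).symm
    · refine ⟨fun x => Gamma.mk S.rel (CuW.aseq S.ax x),
        CuW.alpha_whom S.ax hle hadd hzero,
        fun x t h1 h2 => CuW.alpha_cof S.ax hle x t h1 h2, ?_⟩
      intro T _ _ hT
      constructor
      · intro φ hφ
        exact (cuhom_is_whom hCu hφ).comp (fun _ _ _ hxy hyz => hxy.trans hyz)
          (CuW.alpha_whom S.ax hle hadd hzero)
      · intro g hg
        exact CuW.phi_exists S.ax hle hadd hzero hT g hg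
end
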